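/- arXiv:2105.09964 — 2 statements merged into one kernel-verified Lean document; each statement's English description precedes it below -/
import Mathlib

section
/- Let δ be a permutation of {1, …, n}, η a permutation of {1, …, m}, λ an integer partition of n and μ an integer partition of m. Let δ|η be the shifted concatenation, the permutation of {1, …, n+m} with (δ|η)(i) = δ(i) for 1 ≤ i ≤ n and (δ|η)(i) = η(i−n) + n for n+1 ≤ i ≤ n+m. Then s_{(δ,λ)} · s_{(η,μ)} = s_{(δ|η, λ·μ)} + s_{(δ|η, λ⊙μ)} in F = FreeAlgebra ℚ (Fin N), where λ·μ and λ⊙μ are the concatenation and near concatenation skew diagrams. -/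
open scoped BigOperators Classical

noncomputable section

namespace NCSymPaper

/-- `π` is a set partition of `{0, …, n-1}` (representing `[n] = {1, …, n}`):
its blocks are nonempty and every element lies in exactly one block. -/
def IsSetPartition {n : ℕ} (π : Finset (Finset (Fin n))) : Prop :=
  (∀ B ∈ π, B.Nonempty) ∧ ∀ j : Fin n, ∃! B, B ∈ π ∧ j ∈ B

/-- `j` and `k` lie in a common block of `π`. -/
def sameBlock {n : ℕ} (π : Finset (Finset (Fin n))) (j k : Fin n) : Prop :=
  ∃ B ∈ π, j ∈ B ∧ k ∈ B

/-- The noncommutative monomial `x_{f 1} x_{f 2} ⋯ x_{f n}` in `FreeAlgebra ℚ (Fin N)`. -/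
def ncMonomial {N n : ℕ} (f : Fin n → Fin N) : FreeAlgebra ℚ (Fin N) :=
  (List.ofFn fun j => FreeAlgebra.ι ℚ (f j)).prod

/-- `η` maps every block of `π` to itself. -/
def fixesBlocks {n : ℕ} (π : Finset (Finset (Fin n))) (η : Equiv.Perm (Fin n)) : Prop :=
  ∀ B ∈ π, ∀ j ∈ B, η j ∈ B

/-- The complete homogeneous symmetric function in noncommuting variables `h_π`. -/
def hNC (N : ℕ) {n : ℕ} (π : Finset (Finset (Fin n))) : FreeAlgebra ℚ (Fin N) :=
  ∑ η ∈ Finset.univ.filter (fixesBlocks π),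
    ∑ f ∈ Finset.univ.filter (fun f : Fin n → Fin N =>
        ∀ j k : Fin n, j < k → sameBlock π j k → f j ≤ f k),
      ncMonomial fun j => f (η j)

/-- The monomial symmetric function in noncommuting variables `m_σ`. -/
def mNC (N : ℕ) {n : ℕ} (σ : Finset (Finset (Fin n))) : FreeAlgebra ℚ (Fin N) :=
  ∑ f ∈ Finset.univ.filter (fun f : Fin n → Fin N =>
      ∀ j k : Fin n, f j = f k ↔ sameBlock σ j k),
    ncMonomial f

/-- The elementary symmetric function in noncommuting variables `e_π`. -/
def eNC (N : ℕ) {n : ℕ} (π : Finset (Finset (Fin n))) : FreeAlgebra ℚ (Fin N) :=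
  ∑ f ∈ Finset.univ.filter (fun f : Fin n → Fin N =>
      ∀ j k : Fin n, j ≠ k → sameBlock π j k → f j ≠ f k),
    ncMonomial f

/-- `lam` is an integer partition (weakly decreasing list of positive integers). -/
def IsPartitionList (lam : List ℕ) : Prop :=
  List.Pairwise (· ≥ ·) lam ∧ ∀ x ∈ lam, 0 < x

/-- The entry `β(ε)_i = λ_i − μ_{ε(i)} + ε(i) − i` (0-indexed; `μ_j = 0` beyond `ℓ(μ)`). -/
def betaInt (lam mu : List ℕ) (ε : Equiv.Perm (Fin lam.length)) (i : Fin lam.length) : ℤ :=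
  (lam.get i : ℤ) - (mu.getD (ε i : ℕ) 0 : ℤ) + ((ε i : ℕ) : ℤ) - ((i : ℕ) : ℤ)

/-- The set partition of `[n]` into consecutive intervals of sizes `b 0, b 1, …`
(sizes equal to `0` contribute no block). -/
def intervalBlocks (n : ℕ) {l : ℕ} (b : Fin l → ℕ) : Finset (Finset (Fin n)) :=
  ((Finset.univ : Finset (Fin l)).image fun i =>
      (Finset.univ : Finset (Fin n)).filter fun k : Fin n =>
        (∑ j ∈ Finset.univ.filter fun j => j < i, b j) ≤ (k : ℕ) ∧
          (k : ℕ) < (∑ j ∈ Finset.univ.filter fun j => j < i, b j) + b i).filter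
    fun B => B.Nonempty

/-- The image of a set partition under a map `δ` (blockwise image). -/
def applyMap {n : ℕ} (δ : Fin n → Fin n) (π : Finset (Finset (Fin n))) :
    Finset (Finset (Fin n)) :=
  π.image fun B => B.image δ

/-- The skew Schur function in noncommuting variables
`s_{(δ, λ/μ)} = Σ_ε sgn(ε) (1/β(ε)!) h_{δ[β(ε)]}`, the summand being `0`
whenever some entry of `β(ε)` is negative. -/
def sNC (N n : ℕ) (δ : Fin n → Fin n) (lam mu : List ℕ) : FreeAlgebra ℚ (Fin N) :=
  ∑ ε : Equiv.Perm (Fin lam.length),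
    if ∀ i, 0 ≤ betaInt lam mu ε i then
      (((Equiv.Perm.sign ε : ℤ) : ℚ) *
          ∏ i, 1 / ((betaInt lam mu ε i).toNat.factorial : ℚ)) •
        hNC N (applyMap δ (intervalBlocks n fun i => (betaInt lam mu ε i).toNat))
    else 0

/-- Analogue of `sNC` with `e`'s in place of `h`'s (used for transposed Schur functions). -/
def sNCe (N n : ℕ) (δ : Fin n → Fin n) (lam mu : List ℕ) : FreeAlgebra ℚ (Fin N) :=
  ∑ ε : Equiv.Perm (Fin lam.length),
    if ∀ i, 0 ≤ betaInt lam mu ε i then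
      (((Equiv.Perm.sign ε : ℤ) : ℚ) *
          ∏ i, 1 / ((betaInt lam mu ε i).toNat.factorial : ℚ)) •
        eNC N (applyMap δ (intervalBlocks n fun i => (betaInt lam mu ε i).toNat))
    else 0

/-- The projection `ρ` letting the variables commute. -/
def rho (N : ℕ) : FreeAlgebra ℚ (Fin N) →ₐ[ℚ] MvPolynomial (Fin N) ℚ :=
  FreeAlgebra.lift ℚ MvPolynomial.X

/-- The complete homogeneous symmetric polynomial of degree `k` in `N` commuting
variables (`1` for `k = 0`, `0` for `k < 0`). -/
def hPoly (N : ℕ) (k : ℤ) : MvPolynomial (Fin N) ℚ :=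
  if 0 ≤ k then
    ∑ f ∈ Finset.univ.filter fun f : Fin k.toNat → Fin N => Monotone f,
      ∏ j, MvPolynomial.X (f j)
  else 0

/-- The skew Schur polynomial `s_{λ/μ} = det(h_{λ_i − μ_j − i + j})`. -/
def schurPoly (N : ℕ) (lam mu : List ℕ) : MvPolynomial (Fin N) ℚ :=
  Matrix.det (Matrix.of fun i j : Fin lam.length =>
    hPoly N ((lam.get i : ℤ) - (mu.getD (j : ℕ) 0 : ℤ) - ((i : ℕ) : ℤ) + ((j : ℕ) : ℤ)))

/-- Order on blocks: weakly decreasing size, ties broken by increasing least element. -/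
def blockLe {n : ℕ} (B C : Finset (Fin n)) : Bool :=
  decide (C.card < B.card ∨ (B.card = C.card ∧ B.min ≤ C.min))

/-- The blocks of `π`, listed in weakly decreasing size with ties broken by
increasing least element. -/
def sortedBlocks {n : ℕ} (π : Finset (Finset (Fin n))) : List (Finset (Fin n)) :=
  π.toList.mergeSort blockLe

/-- The one-line notation of `δ_π`. -/
def oneLine {n : ℕ} (π : Finset (Finset (Fin n))) : List (Fin n) :=
  ((sortedBlocks π).map fun B => B.sort (· ≤ ·)).flatten

/-- The permutation `δ_π` (as a function). -/
def deltaPi {n : ℕ} (π : Finset (Finset (Fin n))) : Fin n → Fin n :=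
  fun i => (oneLine π).getD (i : ℕ) i

/-- `λ(π)`: the weakly decreasing list of block sizes of `π`. -/
def lamOf {n : ℕ} (π : Finset (Finset (Fin n))) : List ℕ :=
  (sortedBlocks π).map Finset.card

/-- The standard Schur function in noncommuting variables `s_π = s_{(δ_π, λ(π))}`. -/
def sPi (N : ℕ) {n : ℕ} (π : Finset (Finset (Fin n))) : FreeAlgebra ℚ (Fin N) :=
  sNC N n (deltaPi π) (lamOf π) []

/-- The transposed standard Schur function in noncommuting variables `s^t_π`. -/
def sPiT (N : ℕ) {n : ℕ} (π : Finset (Finset (Fin n))) : FreeAlgebra ℚ (Fin N) :=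
  sNCe N n (deltaPi π) (lamOf π) []

/-- The transpose of an integer partition: `(λ^t)_i = #{j : λ_j ≥ i}`. -/
def transposeList (lam : List ℕ) : List ℕ :=
  (List.range (lam.foldr max 0)).map fun i => (lam.filter fun x => i + 1 ≤ x).length

/-- The weakly decreasing list of parts of a `Nat.Partition`. -/
def nuList {n : ℕ} (ν : Nat.Partition n) : List ℕ :=
  (Multiset.sort ν.parts (· ≤ ·)).reverse

/-- The cells of the skew diagram `λ/μ` in reading order (0-indexed pairs (row, column)). -/
def cellL (lam mu : List ℕ) : List (ℕ × ℕ) :=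
  (List.range lam.length).flatMap fun i =>
    ((List.range (lam.getD i 0)).drop (mu.getD i 0)).map fun j => (i, j)

/-- The `a`-th cell of `λ/μ` in reading order. -/
def cellOf (lam mu : List ℕ) (a : ℕ) : ℕ × ℕ :=
  (cellL lam mu).getD a (0, 0)

/-- `T` (a filling of the cells of `λ/μ`, listed in reading order) is a semistandard
Young tableau: rows weakly increase left to right, columns strictly increase
top to bottom. -/
def IsSSYT {N n : ℕ} (lam mu : List ℕ) (T : Fin n → Fin N) : Prop :=
  ∀ a b : Fin n,
    ((cellOf lam mu a).1 = (cellOf lam mu b).1 ∧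
        (cellOf lam mu b).2 = (cellOf lam mu a).2 + 1 → T a ≤ T b) ∧
    ((cellOf lam mu b).1 = (cellOf lam mu a).1 + 1 ∧
        (cellOf lam mu b).2 = (cellOf lam mu a).2 → T a < T b)

/-- The Rosas–Sagan skew Schur function `S_{λ/μ}`. -/
def RSschur (N n : ℕ) (lam mu : List ℕ) : FreeAlgebra ℚ (Fin N) :=
  ∑ δ : Equiv.Perm (Fin n),
    ∑ T ∈ Finset.univ.filter fun T : Fin n → Fin N => IsSSYT lam mu T,
      ncMonomial fun k => T (δ k)

/-- The Kostka number `K_ν^{λ/μ}`: the number of semistandard Young tableaux of shape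
`λ/μ` in which the entry `i` occurs exactly `ν_i` times (all entries of such a
tableau necessarily lie in `{1, …, n}` where `n = |λ/μ|`). -/
def kostka (n : ℕ) (lam mu nu : List ℕ) : ℕ :=
  (Finset.univ.filter fun T : Fin n → Fin n =>
      IsSSYT lam mu T ∧
        ∀ i : Fin n, (Finset.univ.filter fun a : Fin n => T a = i).card = nu.getD (i : ℕ) 0).card

/-- The shifted concatenation `δ|η` of permutations of `[n]` and `[m]`. -/
def shiftConcat {n m : ℕ} (δ : Equiv.Perm (Fin n)) (η : Equiv.Perm (Fin m)) :
    Equiv.Perm (Fin (n + m)) :=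
  finSumFinEquiv.symm.trans ((Equiv.sumCongr δ η).trans finSumFinEquiv)



section Lemmas

lemma shiftConcat_castAdd {n m : ℕ} (δ : Equiv.Perm (Fin n)) (η : Equiv.Perm (Fin m)) (i : Fin n) :
    shiftConcat δ η (Fin.castAdd m i) = Fin.castAdd m (δ i) := by
  simp [shiftConcat, Equiv.sumCongr_apply]

lemma shiftConcat_natAdd {n m : ℕ} (δ : Equiv.Perm (Fin n)) (η : Equiv.Perm (Fin m)) (i : Fin m) :
    shiftConcat δ η (Fin.natAdd n i) = Fin.natAdd n (η i) := by
  simp [shiftConcat, Equiv.sumCongr_apply]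

section Split
variable {N n m : ℕ} (π₁ : Finset (Finset (Fin n))) (π₂ : Finset (Finset (Fin m)))

/-- the union partition -/
def unionPart : Finset (Finset (Fin (n + m))) :=
  π₁.image (Finset.image (Fin.castAdd m)) ∪ π₂.image (Finset.image (Fin.natAdd n))

variable {π₁ π₂}

lemma natAdd_inj : Function.Injective (Fin.natAdd (m := m) n) := by
  intro a b h
  have := congrArg Fin.val h
  simp only [Fin.natAdd] at this
  exact Fin.ext (by omega)

lemma mem_unionPart {B' : Finset (Fin (n + m))} :
    B' ∈ unionPart π₁ π₂ ↔
      (∃ B ∈ π₁, B.image (Fin.castAdd m) = B') ∨ ∃ C ∈ π₂, C.image (Fin.natAdd n) = B' := by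
  simp [unionPart]

lemma mem_image_castAdd_iff {B : Finset (Fin n)} {j : Fin n} :
    Fin.castAdd m j ∈ B.image (Fin.castAdd m) ↔ j ∈ B := by
  constructor
  · intro h
    obtain ⟨y, hy, hyx⟩ := Finset.mem_image.1 h
    rwa [← Fin.castAdd_injective _ _ hyx]
  · exact fun h => Finset.mem_image_of_mem _ h

lemma mem_image_natAdd_iff {C : Finset (Fin m)} {j : Fin m} :
    Fin.natAdd n j ∈ C.image (Fin.natAdd n) ↔ j ∈ C := by
  constructor
  · intro h
    obtain ⟨y, hy, hyx⟩ := Finset.mem_image.1 h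
    rwa [← natAdd_inj hyx]
  · exact fun h => Finset.mem_image_of_mem _ h

lemma val_lt_of_mem_low {B : Finset (Fin n)} {x : Fin (n + m)} (h : x ∈ B.image (Fin.castAdd m)) :
    (x : ℕ) < n := by
  obtain ⟨y, _, rfl⟩ := Finset.mem_image.1 h; exact y.isLt

lemma le_val_of_mem_high {C : Finset (Fin m)} {x : Fin (n + m)} (h : x ∈ C.image (Fin.natAdd n)) :
    n ≤ (x : ℕ) := by
  obtain ⟨y, _, rfl⟩ := Finset.mem_image.1 h; exact Nat.le_add_right _ _

lemma sameBlock_union_castAdd {j k : Fin n} :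
    sameBlock (unionPart π₁ π₂) (Fin.castAdd m j) (Fin.castAdd m k) ↔ sameBlock π₁ j k := by
  constructor
  · rintro ⟨B', hB', hj, hk⟩
    rcases mem_unionPart.1 hB' with ⟨B, hB, rfl⟩ | ⟨C, hC, rfl⟩
    · exact ⟨B, hB, mem_image_castAdd_iff.1 hj, mem_image_castAdd_iff.1 hk⟩
    · exact absurd (le_val_of_mem_high hj) (by simpa using j.isLt)
  · rintro ⟨B, hB, hj, hk⟩
    exact ⟨B.image (Fin.castAdd m), mem_unionPart.2 (Or.inl ⟨B, hB, rfl⟩),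
      mem_image_castAdd_iff.2 hj, mem_image_castAdd_iff.2 hk⟩

lemma sameBlock_union_natAdd {j k : Fin m} :
    sameBlock (unionPart π₁ π₂) (Fin.natAdd n j) (Fin.natAdd n k) ↔ sameBlock π₂ j k := by
  constructor
  · rintro ⟨B', hB', hj, hk⟩
    rcases mem_unionPart.1 hB' with ⟨B, hB, rfl⟩ | ⟨C, hC, rfl⟩
    · exact absurd (val_lt_of_mem_low hj) (by simp)
    · exact ⟨C, hC, mem_image_natAdd_iff.1 hj, mem_image_natAdd_iff.1 hk⟩
  · rintro ⟨C, hC, hj, hk⟩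
    exact ⟨C.image (Fin.natAdd n), mem_unionPart.2 (Or.inr ⟨C, hC, rfl⟩),
      mem_image_natAdd_iff.2 hj, mem_image_natAdd_iff.2 hk⟩

lemma cond_union_iff (f : Fin (n + m) → Fin N) :
    (∀ j k : Fin (n + m), j < k → sameBlock (unionPart π₁ π₂) j k → f j ≤ f k) ↔
      (∀ j k : Fin n, j < k → sameBlock π₁ j k → f (Fin.castAdd m j) ≤ f (Fin.castAdd m k)) ∧
        ∀ j k : Fin m, j < k → sameBlock π₂ j k → f (Fin.natAdd n j) ≤ f (Fin.natAdd n k) := by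
  constructor
  · intro h
    constructor
    · intro j k hjk hs
      refine h _ _ ?_ (sameBlock_union_castAdd.2 hs)
      have : (j : ℕ) < (k : ℕ) := hjk
      simp only [Fin.lt_def, Fin.coe_castAdd]
      exact this
    · intro j k hjk hs
      refine h _ _ ?_ (sameBlock_union_natAdd.2 hs)
      have : (j : ℕ) < (k : ℕ) := hjk
      simp only [Fin.lt_def, Fin.coe_natAdd]
      omega
  · rintro ⟨h₁, h₂⟩ j k hjk ⟨B', hB', hj, hk⟩
    rcases mem_unionPart.1 hB' with ⟨B, hB, rfl⟩ | ⟨C, hC, rfl⟩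
    · obtain ⟨j₀, hj₀, rfl⟩ := Finset.mem_image.1 hj
      obtain ⟨k₀, hk₀, rfl⟩ := Finset.mem_image.1 hk
      refine h₁ _ _ ?_ ⟨B, hB, hj₀, hk₀⟩
      have : (Fin.castAdd m j₀ : ℕ) < (Fin.castAdd m k₀ : ℕ) := hjk
      simp only [Fin.coe_castAdd] at this
      exact this
    · obtain ⟨j₀, hj₀, rfl⟩ := Finset.mem_image.1 hj
      obtain ⟨k₀, hk₀, rfl⟩ := Finset.mem_image.1 hk
      refine h₂ _ _ ?_ ⟨C, hC, hj₀, hk₀⟩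
      have : (Fin.natAdd n j₀ : ℕ) < (Fin.natAdd n k₀ : ℕ) := hjk
      simp only [Fin.coe_natAdd] at this
      simp only [Fin.lt_def]
      omega

lemma fixes_union_shift (σ₁ : Equiv.Perm (Fin n)) (σ₂ : Equiv.Perm (Fin m)) :
    fixesBlocks (unionPart π₁ π₂) (shiftConcat σ₁ σ₂) ↔
      fixesBlocks π₁ σ₁ ∧ fixesBlocks π₂ σ₂ := by
  constructor
  · intro h
    constructor
    · intro B hB j hj
      have := h (B.image (Fin.castAdd m)) (mem_unionPart.2 (Or.inl ⟨B, hB, rfl⟩))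
        (Fin.castAdd m j) (mem_image_castAdd_iff.2 hj)
      rw [shiftConcat_castAdd] at this
      exact mem_image_castAdd_iff.1 this
    · intro C hC j hj
      have := h (C.image (Fin.natAdd n)) (mem_unionPart.2 (Or.inr ⟨C, hC, rfl⟩))
        (Fin.natAdd n j) (mem_image_natAdd_iff.2 hj)
      rw [shiftConcat_natAdd] at this
      exact mem_image_natAdd_iff.1 this
  · rintro ⟨h₁, h₂⟩ B' hB' x hx
    rcases mem_unionPart.1 hB' with ⟨B, hB, rfl⟩ | ⟨C, hC, rfl⟩
    · obtain ⟨j, hj, rfl⟩ := Finset.mem_image.1 hx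
      rw [shiftConcat_castAdd]
      exact mem_image_castAdd_iff.2 (h₁ B hB j hj)
    · obtain ⟨j, hj, rfl⟩ := Finset.mem_image.1 hx
      rw [shiftConcat_natAdd]
      exact mem_image_natAdd_iff.2 (h₂ C hC j hj)

lemma exists_decomp (σ : Equiv.Perm (Fin (n + m))) (hσ : fixesBlocks (unionPart π₁ π₂) σ)
    (cov₁ : ∀ j : Fin n, ∃ B ∈ π₁, j ∈ B) (cov₂ : ∀ j : Fin m, ∃ C ∈ π₂, j ∈ C) :
    ∃ (σ₁ : Equiv.Perm (Fin n)) (σ₂ : Equiv.Perm (Fin m)), shiftConcat σ₁ σ₂ = σ := by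
  have hlow : ∀ j : Fin n, ((σ (Fin.castAdd m j)) : ℕ) < n := by
    intro j
    obtain ⟨B, hB, hj⟩ := cov₁ j
    exact val_lt_of_mem_low (hσ (B.image (Fin.castAdd m))
      (mem_unionPart.2 (Or.inl ⟨B, hB, rfl⟩)) _ (mem_image_castAdd_iff.2 hj))
  have hhigh : ∀ j : Fin m, n ≤ ((σ (Fin.natAdd n j)) : ℕ) := by
    intro j
    obtain ⟨C, hC, hj⟩ := cov₂ j
    exact le_val_of_mem_high (hσ (C.image (Fin.natAdd n))
      (mem_unionPart.2 (Or.inr ⟨C, hC, rfl⟩)) _ (mem_image_natAdd_iff.2 hj))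
  have inj₁ : Function.Injective (fun j : Fin n => (⟨(σ (Fin.castAdd m j) : ℕ), hlow j⟩ : Fin n)) := by
    intro a b h
    have h' : ((σ (Fin.castAdd m a)) : ℕ) = ((σ (Fin.castAdd m b)) : ℕ) := by
      have := congrArg Fin.val h
      simpa using this
    exact Fin.castAdd_injective _ _ (σ.injective (Fin.ext h'))
  have inj₂ : Function.Injective (fun j : Fin m =>
      (⟨(σ (Fin.natAdd n j) : ℕ) - n, by have := (σ (Fin.natAdd n j)).isLt; have := hhigh j; omega⟩ : Fin m)) := by
    intro a b h
    have h' := congrArg Fin.val h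
    simp only at h'
    have ha := hhigh a; have hb := hhigh b
    have : σ (Fin.natAdd n a) = σ (Fin.natAdd n b) := Fin.ext (by omega)
    exact natAdd_inj (σ.injective this)
  refine ⟨Equiv.ofBijective _ (Finite.injective_iff_bijective.1 inj₁),
    Equiv.ofBijective _ (Finite.injective_iff_bijective.1 inj₂), ?_⟩
  ext x
  refine Fin.addCases (fun j => ?_) (fun j => ?_) x
  · rw [shiftConcat_castAdd]
    simp only [Equiv.ofBijective_apply]
    rfl
  · rw [shiftConcat_natAdd]
    simp only [Equiv.ofBijective_apply, Fin.coe_natAdd]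
    have := hhigh j; omega

lemma ncMonomial_split (g : Fin (n + m) → Fin N) :
    ncMonomial g =
      ncMonomial (fun j => g (Fin.castAdd m j)) * ncMonomial fun j => g (Fin.natAdd n j) := by
  unfold ncMonomial
  rw [List.ofFn_add (f := fun j => FreeAlgebra.ι ℚ (g j)), List.prod_append]
  rfl

lemma appendEquiv_bij :
    Function.Bijective (fun p : (Fin n → Fin N) × (Fin m → Fin N) => Fin.append p.1 p.2) := by
  constructor
  · intro p q h
    have h₁ : p.1 = q.1 := by
      funext j; have := congrFun h (Fin.castAdd m j); simpa [Fin.append_left] using this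
    have h₂ : p.2 = q.2 := by
      funext j; have := congrFun h (Fin.natAdd n j); simpa [Fin.append_right] using this
    exact Prod.ext h₁ h₂
  · intro f
    refine ⟨(fun j => f (Fin.castAdd m j), fun j => f (Fin.natAdd n j)), ?_⟩
    funext x
    refine Fin.addCases (fun j => ?_) (fun j => ?_) x
    · simp [Fin.append_left]
    · simp [Fin.append_right]

lemma inner_sum_split (σ : Equiv.Perm (Fin (n + m))) :
    (∑ f ∈ Finset.univ.filter (fun f : Fin (n + m) → Fin N =>
        ∀ j k, j < k → sameBlock (unionPart π₁ π₂) j k → f j ≤ f k),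
      ncMonomial fun j => f (σ j)) =
    ∑ p ∈ (Finset.univ.filter (fun f : Fin n → Fin N =>
          ∀ j k, j < k → sameBlock π₁ j k → f j ≤ f k)) ×ˢ
        (Finset.univ.filter (fun f : Fin m → Fin N =>
          ∀ j k, j < k → sameBlock π₂ j k → f j ≤ f k)),
      ncMonomial fun j => (Fin.append p.1 p.2) (σ j) := by
  refine (Finset.sum_bij (fun p _ => Fin.append p.1 p.2) ?_ ?_ ?_ ?_).symm
  · rintro ⟨f₁, f₂⟩ hp
    simp only [Finset.mem_product, Finset.mem_filter, Finset.mem_univ, true_and] at hp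
    simp only [Finset.mem_filter, Finset.mem_univ, true_and]
    rw [cond_union_iff]
    constructor
    · intro j k hjk hs; simpa [Fin.append_left] using hp.1 j k hjk hs
    · intro j k hjk hs; simpa [Fin.append_right] using hp.2 j k hjk hs
  · intro p _ q _ h
    exact appendEquiv_bij.1 h
  · intro f hf
    simp only [Finset.mem_filter, Finset.mem_univ, true_and] at hf
    rw [cond_union_iff] at hf
    refine ⟨(fun j => f (Fin.castAdd m j), fun j => f (Fin.natAdd n j)), ?_, ?_⟩
    · simp only [Finset.mem_product, Finset.mem_filter, Finset.mem_univ, true_and]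
      exact hf
    · funext x
      refine Fin.addCases (fun j => ?_) (fun j => ?_) x
      · simp [Fin.append_left]
      · simp [Fin.append_right]
  · intros; rfl

lemma hNC_mul_split (cov₁ : ∀ j : Fin n, ∃ B ∈ π₁, j ∈ B) (cov₂ : ∀ j : Fin m, ∃ C ∈ π₂, j ∈ C) :
    hNC N (unionPart π₁ π₂) = hNC N π₁ * hNC N π₂ := by
  unfold hNC
  conv_rhs => rw [Finset.sum_mul_sum, ← Finset.sum_product']
  refine Finset.sum_bij (fun (p : Equiv.Perm (Fin n) × Equiv.Perm (Fin m)) _ =>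
    shiftConcat p.1 p.2) ?_ ?_ ?_ ?_ |>.symm
  · rintro ⟨σ₁, σ₂⟩ hp
    simp only [Finset.mem_product, Finset.mem_filter, Finset.mem_univ, true_and] at hp
    simp only [Finset.mem_filter, Finset.mem_univ, true_and]
    exact (fixes_union_shift σ₁ σ₂).2 hp
  · rintro ⟨σ₁, σ₂⟩ _ ⟨τ₁, τ₂⟩ _ h
    have h₁ : σ₁ = τ₁ := by
      ext j
      have := congrArg (fun e : Equiv.Perm (Fin (n+m)) => e (Fin.castAdd m j)) h
      simp only [shiftConcat_castAdd] at this
      exact congrArg Fin.val (Fin.castAdd_injective _ _ this)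
    have h₂ : σ₂ = τ₂ := by
      ext j
      have := congrArg (fun e : Equiv.Perm (Fin (n+m)) => e (Fin.natAdd n j)) h
      simp only [shiftConcat_natAdd] at this
      exact congrArg Fin.val (natAdd_inj this)
    simp [h₁, h₂]
  · intro σ hσ
    simp only [Finset.mem_filter, Finset.mem_univ, true_and] at hσ
    obtain ⟨σ₁, σ₂, hs⟩ := exists_decomp σ hσ cov₁ cov₂
    refine ⟨(σ₁, σ₂), ?_, hs⟩
    simp only [Finset.mem_product, Finset.mem_filter, Finset.mem_univ, true_and]
    exact (fixes_union_shift σ₁ σ₂).1 (hs ▸ hσ)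
  · rintro ⟨σ₁, σ₂⟩ _
    rw [inner_sum_split]
    rw [Finset.sum_mul_sum, ← Finset.sum_product']
    refine Finset.sum_congr rfl fun p _ => ?_
    rw [ncMonomial_split]
    congr 1
    · refine congrArg ncMonomial (funext fun j => ?_)
      simp [shiftConcat_castAdd, Fin.append_left]
    · refine congrArg ncMonomial (funext fun j => ?_)
      simp [shiftConcat_natAdd, Fin.append_right]

end Split

/-- offset -/
def off {l : ℕ} (b : Fin l → ℕ) (i : Fin l) : ℕ :=
  ∑ j ∈ Finset.univ.filter fun j => j < i, b j

/-- the i-th interval block -/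
def blk (n : ℕ) {l : ℕ} (b : Fin l → ℕ) (i : Fin l) : Finset (Fin n) :=
  (Finset.univ : Finset (Fin n)).filter fun k : Fin n =>
    off b i ≤ (k : ℕ) ∧ (k : ℕ) < off b i + b i

lemma intervalBlocks_eq (n : ℕ) {l : ℕ} (b : Fin l → ℕ) :
    intervalBlocks n b = (Finset.univ.image (blk n b)).filter fun B => B.Nonempty := rfl

lemma mem_intervalBlocks {n l : ℕ} {b : Fin l → ℕ} {B : Finset (Fin n)} :
    B ∈ intervalBlocks n b ↔ (∃ i, blk n b i = B) ∧ B.Nonempty := by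
  rw [intervalBlocks_eq]
  simp [Finset.mem_filter, Finset.mem_image]

/-- `off` as a sum over `univ` with `if`. -/
lemma off_eq_if {l : ℕ} (b : Fin l → ℕ) (i : Fin l) :
    off b i = ∑ j, if j < i then b j else 0 := by
  rw [off, Finset.sum_filter]

lemma off_add_le {l : ℕ} (b : Fin l → ℕ) (i : Fin l) : off b i + b i ≤ ∑ j, b j := by
  have hni : i ∉ Finset.univ.filter fun j => j < i := by simp
  have : off b i + b i = ∑ j ∈ insert i (Finset.univ.filter fun j => j < i), b j := by
    rw [Finset.sum_insert hni, off]; ring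
  rw [this]
  exact Finset.sum_le_sum_of_subset (Finset.subset_univ _)

/-- ℕ-indexed partial sums -/
def psum {l : ℕ} (b : Fin l → ℕ) (t : ℕ) : ℕ :=
  ∑ j ∈ Finset.univ.filter fun j : Fin l => (j : ℕ) < t, b j

lemma off_eq_psum {l : ℕ} (b : Fin l → ℕ) (i : Fin l) : off b i = psum b i := by
  rw [off, psum]
  apply Finset.sum_congr ?_ (fun _ _ => rfl)
  apply Finset.filter_congr
  intro j _
  exact Iff.rfl

lemma psum_zero {l : ℕ} (b : Fin l → ℕ) : psum b 0 = 0 := by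
  rw [psum]
  apply Finset.sum_eq_zero
  intro j hj
  simp at hj

lemma psum_top {l : ℕ} (b : Fin l → ℕ) : psum b l = ∑ j, b j := by
  rw [psum]
  congr 1
  apply Finset.filter_true_of_mem
  intro j _; exact j.isLt

lemma psum_succ {l : ℕ} (b : Fin l → ℕ) (t : ℕ) (ht : t < l) :
    psum b (t + 1) = psum b t + b ⟨t, ht⟩ := by
  rw [psum, psum]
  have : (Finset.univ.filter fun j : Fin l => (j : ℕ) < t + 1) =
      insert ⟨t, ht⟩ (Finset.univ.filter fun j : Fin l => (j : ℕ) < t) := by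
    ext j
    simp only [Finset.mem_filter, Finset.mem_univ, true_and, Finset.mem_insert]
    constructor
    · intro h
      rcases Nat.lt_succ_iff_lt_or_eq.1 h with h | h
      · exact Or.inr h
      · exact Or.inl (Fin.ext h)
    · rintro (rfl | h)
      · simp
      · omega
  rw [this, Finset.sum_insert (by simp)]
  ring

lemma exists_block_index {n l : ℕ} (b : Fin l → ℕ) (hsum : ∑ j, b j = n) (x : Fin n) :
    ∃ i : Fin l, off b i ≤ (x : ℕ) ∧ (x : ℕ) < off b i + b i := by
  classical
  set P : ℕ → Prop := fun t => psum b t ≤ (x : ℕ) with hP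
  have hP0 : P 0 := by simp [hP, psum_zero]
  have hl0 : 0 < l := by
    rcases Nat.eq_zero_or_pos l with h | h
    · exfalso
      have hn : n = 0 := by
        rw [← hsum]
        subst h
        simp
      have := x.isLt
      omega
    · exact h
  have hfg := Nat.findGreatest_spec (P := P) (Nat.zero_le l) hP0
  set t₀ := Nat.findGreatest P l with ht₀
  have ht₀le : t₀ ≤ l := Nat.findGreatest_le l
  have ht₀lt : t₀ < l := by
    rcases Nat.lt_or_ge t₀ l with h | h
    · exact h
    · exfalso
      have hteq : t₀ = l := le_antisymm ht₀le h
      rw [hteq] at hfg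
      simp only [hP] at hfg
      rw [psum_top b, hsum] at hfg
      have := x.isLt
      omega
  refine ⟨⟨t₀, ht₀lt⟩, ?_, ?_⟩
  · rw [off_eq_psum]; exact hfg
  · have hng : ¬ P (t₀ + 1) := Nat.findGreatest_is_greatest (P := P) (n := l) (by omega) (by omega)
    rw [off_eq_psum]
    have := psum_succ b t₀ ht₀lt
    simp only [hP] at hng ⊢
    omega

lemma exists_mem_intervalBlocks {n l : ℕ} (b : Fin l → ℕ) (hsum : ∑ j, b j = n) (x : Fin n) :
    ∃ B ∈ intervalBlocks n b, x ∈ B := by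
  obtain ⟨i, h1, h2⟩ := exists_block_index b hsum x
  refine ⟨blk n b i, ?_, ?_⟩
  · exact mem_intervalBlocks.2 ⟨⟨i, rfl⟩, ⟨x, by simp [blk, h1, h2]⟩⟩
  · simp [blk, h1, h2]

lemma exists_mem_applyMap {n : ℕ} {δ : Fin n → Fin n} (hδ : Function.Surjective δ)
    {π : Finset (Finset (Fin n))} (h : ∀ x : Fin n, ∃ B ∈ π, x ∈ B) (x : Fin n) :
    ∃ B ∈ applyMap δ π, x ∈ B := by
  obtain ⟨y, rfl⟩ := hδ x
  obtain ⟨B, hB, hy⟩ := h y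
  exact ⟨B.image δ, Finset.mem_image_of_mem _ hB, Finset.mem_image_of_mem _ hy⟩


lemma off_append_castAdd {l k : ℕ} (b : Fin l → ℕ) (c : Fin k → ℕ) (i : Fin l) :
    off (Fin.append b c) (Fin.castAdd k i) = off b i := by
  rw [off_eq_if, off_eq_if, Fin.sum_univ_add]
  have h2 : ∀ j : Fin k, ¬ (Fin.natAdd l j < Fin.castAdd k i) := by
    intro j
    simp only [Fin.lt_def, Fin.coe_natAdd, Fin.coe_castAdd]
    have := i.isLt; omega
  have hz : (∑ j : Fin k, if Fin.natAdd l j < Fin.castAdd k i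
      then Fin.append b c (Fin.natAdd l j) else 0) = 0 :=
    Finset.sum_eq_zero fun j _ => if_neg (h2 j)
  rw [hz, add_zero]
  apply Finset.sum_congr rfl
  intro j _
  rw [Fin.append_left]
  exact if_congr Iff.rfl rfl rfl

lemma off_append_natAdd {l k : ℕ} (b : Fin l → ℕ) (c : Fin k → ℕ) (i : Fin k) :
    off (Fin.append b c) (Fin.natAdd l i) = (∑ j, b j) + off c i := by
  rw [off_eq_if, off_eq_if, Fin.sum_univ_add]
  congr 1
  · apply Finset.sum_congr rfl
    intro j _
    rw [Fin.append_left, if_pos]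
    simp only [Fin.lt_def, Fin.coe_natAdd, Fin.coe_castAdd]
    have := j.isLt; omega
  · apply Finset.sum_congr rfl
    intro j _
    rw [Fin.append_right]
    refine if_congr ?_ rfl rfl
    simp only [Fin.lt_def, Fin.coe_natAdd]
    omega

lemma blk_append_castAdd {l k n m : ℕ} (b : Fin l → ℕ) (c : Fin k → ℕ)
    (hb : ∑ j, b j = n) (i : Fin l) :
    blk (n + m) (Fin.append b c) (Fin.castAdd k i) = (blk n b i).image (Fin.castAdd m) := by
  ext x
  simp only [blk, Finset.mem_filter, Finset.mem_univ, true_and, Finset.mem_image]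
  rw [off_append_castAdd, Fin.append_left]
  constructor
  · rintro ⟨h1, h2⟩
    have hoff := off_add_le b i
    have hx : (x : ℕ) < n := by omega
    exact ⟨⟨(x : ℕ), hx⟩, ⟨h1, h2⟩, Fin.ext rfl⟩
  · rintro ⟨y, ⟨h1, h2⟩, rfl⟩
    exact ⟨h1, h2⟩

lemma blk_append_natAdd {l k n m : ℕ} (b : Fin l → ℕ) (c : Fin k → ℕ)
    (hb : ∑ j, b j = n) (i : Fin k) :
    blk (n + m) (Fin.append b c) (Fin.natAdd l i) = (blk m c i).image (Fin.natAdd n) := by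
  ext x
  simp only [blk, Finset.mem_filter, Finset.mem_univ, true_and, Finset.mem_image]
  rw [off_append_natAdd, Fin.append_right, hb]
  constructor
  · rintro ⟨h1, h2⟩
    have hx : (x : ℕ) - n < m := by have := x.isLt; omega
    refine ⟨⟨(x : ℕ) - n, hx⟩, ⟨?_, ?_⟩, Fin.ext ?_⟩
    · show off c i ≤ (x : ℕ) - n
      omega
    · show (x : ℕ) - n < off c i + c i
      omega
    · show n + ((x : ℕ) - n) = (x : ℕ)
      omega
  · rintro ⟨y, ⟨h1, h2⟩, rfl⟩
    simp only [Fin.coe_natAdd]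
    omega

lemma intervalBlocks_append {l k n m : ℕ} (b : Fin l → ℕ) (c : Fin k → ℕ)
    (hb : ∑ j, b j = n) :
    intervalBlocks (n + m) (Fin.append b c) =
      (intervalBlocks n b).image (Finset.image (Fin.castAdd m)) ∪
        (intervalBlocks m c).image (Finset.image (Fin.natAdd n)) := by
  ext B
  rw [mem_intervalBlocks]
  simp only [Finset.mem_union, Finset.mem_image]
  constructor
  · rintro ⟨⟨i, rfl⟩, hne⟩
    by_cases h : (i : ℕ) < l
    · have hi : i = Fin.castAdd k ⟨(i : ℕ), h⟩ := Fin.ext rfl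
      rw [hi, blk_append_castAdd b c hb] at hne ⊢
      left
      refine ⟨blk n b ⟨(i : ℕ), h⟩, mem_intervalBlocks.2 ⟨⟨_, rfl⟩, ?_⟩, rfl⟩
      exact Finset.image_nonempty.1 hne
    · have h' : (i : ℕ) - l < k := by have := i.isLt; omega
      have hi : i = Fin.natAdd l ⟨(i : ℕ) - l, h'⟩ := by
        refine Fin.ext ?_
        simp only [Fin.coe_natAdd]
        omega
      rw [hi, blk_append_natAdd b c hb] at hne ⊢
      right
      refine ⟨blk m c ⟨(i : ℕ) - l, h'⟩, mem_intervalBlocks.2 ⟨⟨_, rfl⟩, ?_⟩, rfl⟩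
      exact Finset.image_nonempty.1 hne
  · rintro (⟨B₀, hB₀, rfl⟩ | ⟨C₀, hC₀, rfl⟩)
    · obtain ⟨⟨i, rfl⟩, hne⟩ := mem_intervalBlocks.1 hB₀
      exact ⟨⟨Fin.castAdd k i, blk_append_castAdd b c hb i⟩, hne.image _⟩
    · obtain ⟨⟨i, rfl⟩, hne⟩ := mem_intervalBlocks.1 hC₀
      exact ⟨⟨Fin.natAdd l i, blk_append_natAdd b c hb i⟩, hne.image _⟩

lemma off_succAbove {L : ℕ} (A : Fin (L + 1) → ℕ) (a : Fin (L + 1)) (ha : A a = 0) (i : Fin L) :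
    off A (a.succAbove i) = off (fun j => A (a.succAbove j)) i := by
  rw [off_eq_if, off_eq_if, Fin.sum_univ_succAbove _ a, ha, ite_self, zero_add]
  apply Finset.sum_congr rfl
  intro j _
  exact if_congr Fin.succAbove_lt_succAbove_iff rfl rfl

lemma blk_succAbove {n L : ℕ} (A : Fin (L + 1) → ℕ) (a : Fin (L + 1)) (ha : A a = 0) (i : Fin L) :
    blk n A (a.succAbove i) = blk n (fun j => A (a.succAbove j)) i := by
  unfold blk
  rw [off_succAbove A a ha i]

lemma blk_self_empty {n L : ℕ} (A : Fin (L + 1) → ℕ) (a : Fin (L + 1)) (ha : A a = 0) :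
    blk n A a = ∅ := by
  ext x
  simp only [blk, Finset.mem_filter, Finset.mem_univ, true_and, ha, Finset.notMem_empty,
    iff_false]
  omega

lemma intervalBlocks_erase_zero {n L : ℕ} (A : Fin (L + 1) → ℕ) (a : Fin (L + 1)) (ha : A a = 0) :
    intervalBlocks n A = intervalBlocks n fun j => A (a.succAbove j) := by
  ext B
  rw [mem_intervalBlocks, mem_intervalBlocks]
  constructor
  · rintro ⟨⟨i, rfl⟩, hne⟩
    by_cases h : i = a
    · rw [h, blk_self_empty A a ha] at hne
      exact absurd hne (by simp)
    · obtain ⟨j, rfl⟩ := Fin.exists_succAbove_eq h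
      exact ⟨⟨j, (blk_succAbove A a ha j).symm⟩, hne⟩
  · rintro ⟨⟨i, rfl⟩, hne⟩
    exact ⟨⟨a.succAbove i, blk_succAbove A a ha i⟩, hne⟩

lemma applyMap_union {n : ℕ} (δ : Fin n → Fin n) (s t : Finset (Finset (Fin n))) :
    applyMap δ (s ∪ t) = applyMap δ s ∪ applyMap δ t :=
  Finset.image_union _ _

lemma applyMap_image {q p : ℕ} (δ' : Fin p → Fin p) (e : Fin q → Fin p) (δ : Fin q → Fin q)
    (hcomm : ∀ x, δ' (e x) = e (δ x)) (π : Finset (Finset (Fin q))) :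
    applyMap δ' (π.image (Finset.image e)) = (applyMap δ π).image (Finset.image e) := by
  unfold applyMap
  rw [Finset.image_image, Finset.image_image]
  congr 1
  funext B
  show (B.image e).image δ' = (B.image δ).image e
  rw [Finset.image_image, Finset.image_image]
  exact Finset.image_congr fun x _ => hcomm x


end Lemmas


section Reindex

/-- `betaInt` in terms of `getD`, over an arbitrary index type `Fin M`. -/
def bet (L R : List ℕ) {M : ℕ} (τ : Equiv.Perm (Fin M)) (x : Fin M) : ℤ :=
  (L.getD (x : ℕ) 0 : ℤ) - (R.getD ((τ x) : ℕ) 0 : ℤ) + (((τ x) : ℕ) : ℤ) - ((x : ℕ) : ℤ)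

/-- One summand of `sNCM`. -/
def sNCMterm (N n : ℕ) (δ : Fin n → Fin n) (L R : List ℕ) {M : ℕ} (τ : Equiv.Perm (Fin M)) :
    FreeAlgebra ℚ (Fin N) :=
  if ∀ x, 0 ≤ bet L R τ x then
    (((Equiv.Perm.sign τ : ℤ) : ℚ) *
        ∏ x, 1 / ((bet L R τ x).toNat.factorial : ℚ)) •
      hNC N (applyMap δ (intervalBlocks n fun x => (bet L R τ x).toNat))
  else 0

/-- `sNC` with the index type replaced by `Fin M`. -/
def sNCM (N n : ℕ) (δ : Fin n → Fin n) (L R : List ℕ) (M : ℕ) : FreeAlgebra ℚ (Fin N) :=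
  ∑ τ : Equiv.Perm (Fin M), sNCMterm N n δ L R τ

lemma betaInt_eq_bet (L R : List ℕ) (ε : Equiv.Perm (Fin L.length)) (i : Fin L.length) :
    betaInt L R ε i = bet L R ε i := by
  unfold betaInt bet
  rw [List.get_eq_getElem, List.getD_eq_getElem L 0 i.isLt]

set_option maxHeartbeats 1000000 in
lemma sNC_eq_sNCM (N n : ℕ) (δ : Fin n → Fin n) (L R : List ℕ) {M : ℕ} (h : M = L.length) :
    sNC N n δ L R = sNCM N n δ L R M := by
  subst h
  unfold sNC sNCM sNCMterm
  apply Finset.sum_congr rfl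
  intro ε _
  simp only [← betaInt_eq_bet]

end Reindex


section PermMachinery

/-- block-diagonal embedding of a pair of permutations, with a cast. -/
def toP {l k M : ℕ} (h : M = l + k) (p : Equiv.Perm (Fin l) × Equiv.Perm (Fin k)) :
    Equiv.Perm (Fin M) :=
  (finCongr h.symm).permCongr (shiftConcat p.1 p.2)

lemma toP_apply {l k M : ℕ} (h : M = l + k) (p : Equiv.Perm (Fin l) × Equiv.Perm (Fin k))
    (x : Fin M) :
    toP h p x = (finCongr h.symm) (shiftConcat p.1 p.2 (finCongr h x)) := rfl

lemma toP_val_low {l k M : ℕ} (h : M = l + k) (p) (x : Fin M) (hx : (x : ℕ) < l) :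
    ((toP h p x : Fin M) : ℕ) = p.1 ⟨(x : ℕ), hx⟩ := by
  rw [toP_apply]
  have he : finCongr h x = Fin.castAdd k ⟨(x : ℕ), hx⟩ := Fin.ext rfl
  rw [he, shiftConcat_castAdd]
  rfl

lemma toP_val_high {l k M : ℕ} (h : M = l + k) (p) (x : Fin M) (hx : l ≤ (x : ℕ)) :
    ((toP h p x : Fin M) : ℕ) = l + p.2 ⟨(x : ℕ) - l, by have := x.isLt; omega⟩ := by
  rw [toP_apply]
  have he : finCongr h x = Fin.natAdd l ⟨(x : ℕ) - l, by have := x.isLt; omega⟩ := by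
    refine Fin.ext ?_
    simp only [finCongr_apply, Fin.coe_cast, Fin.coe_natAdd]
    omega
  rw [he, shiftConcat_natAdd]
  rfl

lemma sign_toP {l k M : ℕ} (h : M = l + k) (p) :
    Equiv.Perm.sign (toP h p) = Equiv.Perm.sign p.1 * Equiv.Perm.sign p.2 := by
  unfold toP
  rw [Equiv.Perm.sign_permCongr]
  have : shiftConcat p.1 p.2 = finSumFinEquiv.permCongr (Equiv.sumCongr p.1 p.2) := rfl
  rw [this, Equiv.Perm.sign_permCongr, Equiv.Perm.sign_sumCongr]

lemma toP_inj {l k M : ℕ} (h : M = l + k) : Function.Injective (toP h) := by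
  intro p q hpq
  have key : ∀ x : Fin M, ((toP h p x : Fin M) : ℕ) = ((toP h q x : Fin M) : ℕ) := by
    intro x; rw [hpq]
  have h1 : p.1 = q.1 := by
    ext j
    have hj := j.isLt
    have hjM : (j : ℕ) < M := by omega
    have hx : ((⟨(j : ℕ), hjM⟩ : Fin M) : ℕ) < l := hj
    have hk := key ⟨(j : ℕ), hjM⟩
    rw [toP_val_low h p _ hx, toP_val_low h q _ hx] at hk
    simpa [Fin.eta] using hk
  have h2 : p.2 = q.2 := by
    ext j
    have hj := j.isLt
    have hjM : l + (j : ℕ) < M := by omega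
    have hx : l ≤ ((⟨l + (j : ℕ), hjM⟩ : Fin M) : ℕ) := Nat.le_add_right _ _
    have hk := key ⟨l + (j : ℕ), hjM⟩
    rw [toP_val_high h p _ hx, toP_val_high h q _ hx] at hk
    simp only [Fin.val_mk, Nat.add_sub_cancel_left, Fin.eta] at hk
    omega
  exact Prod.ext h1 h2

lemma toP_surj {l k M : ℕ} (h : M = l + k) (eps : Equiv.Perm (Fin M))
    (hP : ∀ i : Fin M, l ≤ (i : ℕ) → l ≤ ((eps i : Fin M) : ℕ)) :
    ∃ p, toP h p = eps := by
  classical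
  have hlow : ∀ i : Fin M, (i : ℕ) < l → ((eps i : Fin M) : ℕ) < l := by
    intro i hi
    by_contra hc
    push_neg at hc
    set H : Finset (Fin M) := Finset.univ.filter (fun x => l ≤ (x : ℕ)) with hH
    have hsub : H.image eps ⊆ H := by
      intro y hy
      obtain ⟨x, hx, rfl⟩ := Finset.mem_image.1 hy
      simp only [hH, Finset.mem_filter, Finset.mem_univ, true_and] at hx ⊢
      exact hP x hx
    have heq : H.image eps = H :=
      Finset.eq_of_subset_of_card_le hsub
        (le_of_eq (Finset.card_image_of_injective H eps.injective).symm)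
    have hmem : eps i ∈ H := by
      simp only [hH, Finset.mem_filter, Finset.mem_univ, true_and]
      exact hc
    rw [← heq] at hmem
    obtain ⟨x, hx, hxe⟩ := Finset.mem_image.1 hmem
    have hxi : x = i := eps.injective hxe
    subst hxi
    simp only [hH, Finset.mem_filter, Finset.mem_univ, true_and] at hx
    omega
  have f1inj : Function.Injective (fun j : Fin l =>
      (⟨((eps ⟨(j : ℕ), by have := j.isLt; omega⟩ : Fin M) : ℕ),
        hlow _ j.isLt⟩ : Fin l)) := by
    intro a b hab
    have hv1 := congrArg Fin.val hab
    simp only [Fin.val_mk] at hv1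
    have hv2 := eps.injective (Fin.ext hv1)
    have hv3 := congrArg Fin.val hv2
    simp only [Fin.val_mk] at hv3
    exact Fin.ext hv3
  have f2inj : Function.Injective (fun j : Fin k =>
      (⟨((eps ⟨l + (j : ℕ), by have := j.isLt; omega⟩ : Fin M) : ℕ) - l,
        by
          have hz1 := hP ⟨l + (j : ℕ), by have := j.isLt; omega⟩ (Nat.le_add_right _ _)
          have hz2 := (eps ⟨l + (j : ℕ), by have := j.isLt; omega⟩).isLt
          omega⟩ : Fin k)) := by
    intro a b hab
    have hv1 := congrArg Fin.val hab
    simp only [Fin.val_mk] at hv1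
    have ha := hP ⟨l + (a : ℕ), by have := a.isLt; omega⟩ (Nat.le_add_right _ _)
    have hb := hP ⟨l + (b : ℕ), by have := b.isLt; omega⟩ (Nat.le_add_right _ _)
    have hv : ((eps ⟨l + (a : ℕ), by have := a.isLt; omega⟩ : Fin M) : ℕ) =
        ((eps ⟨l + (b : ℕ), by have := b.isLt; omega⟩ : Fin M) : ℕ) := by omega
    have hv2 := eps.injective (Fin.ext hv)
    have hv3 := congrArg Fin.val hv2
    simp only [Fin.val_mk] at hv3
    exact Fin.ext (by omega)
  refine ⟨(Equiv.ofBijective _ (Finite.injective_iff_bijective.1 f1inj),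
    Equiv.ofBijective _ (Finite.injective_iff_bijective.1 f2inj)), ?_⟩
  ext x
  by_cases hx : (x : ℕ) < l
  · rw [toP_val_low _ _ _ hx]
    simp [Fin.eta]
  · push_neg at hx
    rw [toP_val_high _ _ _ hx]
    simp only [Equiv.ofBijective_apply, Fin.val_mk]
    have harith : l + ((x : ℕ) - l) = (x : ℕ) := by omega
    simp only [harith, Fin.eta]
    have := hP x hx
    omega

end PermMachinery


section ToQ
variable {L : ℕ}

/-- extend a permutation of `Fin L` to `Fin (L+1)` fixing `a`, acting via `succAbove`. -/
def extQ (a : Fin (L + 1)) (σ : Equiv.Perm (Fin L)) : Equiv.Perm (Fin (L + 1)) :=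
  ((finSuccEquiv' a).symm).permCongr (Equiv.optionCongr σ)

lemma extQ_apply_self (a : Fin (L + 1)) (σ : Equiv.Perm (Fin L)) : extQ a σ a = a := by
  simp [extQ, Equiv.permCongr_apply, finSuccEquiv'_at, finSuccEquiv'_symm_none]

lemma extQ_apply_succAbove (a : Fin (L + 1)) (σ : Equiv.Perm (Fin L)) (i : Fin L) :
    extQ a σ (a.succAbove i) = a.succAbove (σ i) := by
  simp [extQ, Equiv.permCongr_apply, finSuccEquiv'_succAbove, finSuccEquiv'_symm_some]

lemma sign_extQ (a : Fin (L + 1)) (σ : Equiv.Perm (Fin L)) :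
    Equiv.Perm.sign (extQ a σ) = Equiv.Perm.sign σ := by
  unfold extQ
  rw [Equiv.Perm.sign_permCongr, Equiv.optionCongr_sign]

/-- `toQ a b σ` sends `a` to `b` and `a.succAbove i` to `b.succAbove (σ i)`. -/
def toQ (a b : Fin (L + 1)) (σ : Equiv.Perm (Fin L)) : Equiv.Perm (Fin (L + 1)) :=
  Equiv.swap a b * extQ a σ

lemma toQ_apply_self (a b : Fin (L + 1)) (σ : Equiv.Perm (Fin L)) : toQ a b σ a = b := by
  simp [toQ, Equiv.Perm.mul_apply, extQ_apply_self, Equiv.swap_apply_left]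

lemma swap_succAbove (a b : Fin (L + 1)) (hab : (a : ℕ) = (b : ℕ) + 1) (y : Fin L) :
    Equiv.swap a b (a.succAbove y) = b.succAbove y := by
  rcases lt_trichotomy ((y : ℕ)) ((b : ℕ)) with hy | hy | hy
  · have h1 : a.succAbove y = Fin.castSucc y :=
      Fin.succAbove_of_castSucc_lt _ _ (by rw [Fin.lt_def]; simp [Fin.coe_castSucc]; omega)
    have h2 : b.succAbove y = Fin.castSucc y :=
      Fin.succAbove_of_castSucc_lt _ _ (by rw [Fin.lt_def]; simp [Fin.coe_castSucc]; omega)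
    rw [h1, h2]
    apply Equiv.swap_apply_of_ne_of_ne
    · intro hc; have := congrArg Fin.val hc; simp [Fin.coe_castSucc] at this; omega
    · intro hc; have := congrArg Fin.val hc; simp [Fin.coe_castSucc] at this; omega
  · have h1 : a.succAbove y = Fin.castSucc y :=
      Fin.succAbove_of_castSucc_lt _ _ (by rw [Fin.lt_def]; simp [Fin.coe_castSucc]; omega)
    have hcb : Fin.castSucc y = b := Fin.ext (by simp [Fin.coe_castSucc]; omega)
    have h2 : b.succAbove y = Fin.succ y :=
      Fin.succAbove_of_le_castSucc _ _ (by rw [Fin.le_def]; simp [Fin.coe_castSucc]; omega)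
    rw [h1, hcb, Equiv.swap_apply_right, h2]
    exact Fin.ext (by simp [Fin.val_succ]; omega)
  · have h1 : a.succAbove y = Fin.succ y :=
      Fin.succAbove_of_le_castSucc _ _ (by rw [Fin.le_def]; simp [Fin.coe_castSucc]; omega)
    have h2 : b.succAbove y = Fin.succ y :=
      Fin.succAbove_of_le_castSucc _ _ (by rw [Fin.le_def]; simp [Fin.coe_castSucc]; omega)
    rw [h1, h2]
    apply Equiv.swap_apply_of_ne_of_ne
    · intro hc; have := congrArg Fin.val hc; simp [Fin.val_succ] at this; omega
    · intro hc; have := congrArg Fin.val hc; simp [Fin.val_succ] at this; omega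

lemma toQ_apply_succAbove (a b : Fin (L + 1)) (hab : (a : ℕ) = (b : ℕ) + 1)
    (σ : Equiv.Perm (Fin L)) (i : Fin L) :
    toQ a b σ (a.succAbove i) = b.succAbove (σ i) := by
  simp only [toQ, Equiv.Perm.mul_apply, extQ_apply_succAbove]
  exact swap_succAbove a b hab (σ i)

lemma sign_toQ (a b : Fin (L + 1)) (hab : (a : ℕ) = (b : ℕ) + 1) (σ : Equiv.Perm (Fin L)) :
    Equiv.Perm.sign (toQ a b σ) = - Equiv.Perm.sign σ := by
  unfold toQ
  rw [map_mul, sign_extQ, Equiv.Perm.sign_swap (by intro hc; have := congrArg Fin.val hc; omega)]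
  rw [neg_one_mul]

lemma toQ_inj (a b : Fin (L + 1)) (hab : (a : ℕ) = (b : ℕ) + 1) :
    Function.Injective (toQ a b) := by
  intro σ τ hst
  ext i
  have h1 := congrArg (fun e : Equiv.Perm (Fin (L + 1)) => e (a.succAbove i)) hst
  simp only [toQ_apply_succAbove a b hab] at h1
  exact congrArg Fin.val (Fin.succAbove_right_injective h1)

lemma toQ_surj (a b : Fin (L + 1)) (hab : (a : ℕ) = (b : ℕ) + 1)
    (ε : Equiv.Perm (Fin (L + 1))) (hQ : ε a = b) :
    ∃ σ, toQ a b σ = ε := by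
  classical
  have hne : ∀ i : Fin L, ε (a.succAbove i) ≠ b := by
    intro i hc
    rw [← hQ] at hc
    exact Fin.succAbove_ne a i (ε.injective hc)
  have hrep : ∀ i : Fin L, ∃ j, b.succAbove j = ε (a.succAbove i) := by
    intro i
    exact Fin.exists_succAbove_eq (hne i)
  set g : Fin L → Fin L := fun i => Classical.choose (hrep i) with hg
  have hgspec : ∀ i, b.succAbove (g i) = ε (a.succAbove i) := fun i => Classical.choose_spec (hrep i)
  have ginj : Function.Injective g := by
    intro i j hij
    have : b.succAbove (g i) = b.succAbove (g j) := by rw [hij]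
    rw [hgspec i, hgspec j] at this
    exact Fin.succAbove_right_injective (ε.injective this)
  refine ⟨Equiv.ofBijective g (Finite.injective_iff_bijective.1 ginj), ?_⟩
  ext x
  by_cases hx : x = a
  · subst hx
    rw [toQ_apply_self, hQ]
  · obtain ⟨i, rfl⟩ := Fin.exists_succAbove_eq hx
    rw [toQ_apply_succAbove a b hab]
    simp only [Equiv.ofBijective_apply]
    rw [hgspec i]

end ToQ


section ListLemmas
variable (lam mu : List ℕ)

lemma L1_getD_low {i : ℕ} (hi : i < lam.length) :
    (lam.map (· + mu.getD 0 0 - 1) ++ mu).getD i 0 = lam.getD i 0 + mu.getD 0 0 - 1 := by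
  have h1 : i < (lam.map (· + mu.getD 0 0 - 1) ++ mu).length := by simp; omega
  have h2 : i < (lam.map (· + mu.getD 0 0 - 1)).length := by simpa using hi
  rw [List.getD_eq_getElem _ 0 h1, List.getElem_append_left h2, List.getElem_map,
    List.getD_eq_getElem _ 0 hi]

lemma L1_getD_high {i : ℕ} (hi : lam.length ≤ i) (hi2 : i < lam.length + mu.length) :
    (lam.map (· + mu.getD 0 0 - 1) ++ mu).getD i 0 = mu.getD (i - lam.length) 0 := by
  have h1 : i < (lam.map (· + mu.getD 0 0 - 1) ++ mu).length := by simp; omega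
  have h2 : (lam.map (· + mu.getD 0 0 - 1)).length ≤ i := by simpa using hi
  rw [List.getD_eq_getElem _ 0 h1, List.getElem_append_right h2]
  simp only [List.length_map]
  exact (List.getD_eq_getElem mu 0 (by omega)).symm

lemma R1_getD (i : ℕ) :
    (List.replicate lam.length (mu.getD 0 0 - 1)).getD i 0 =
      if i < lam.length then mu.getD 0 0 - 1 else 0 := by
  by_cases h : i < lam.length
  · rw [if_pos h, List.getD_eq_getElem _ 0 (by simpa using h), List.getElem_replicate]
  · rw [if_neg h, List.getD_eq_default _ 0 (by simpa using h)]

lemma L2_getD_low {i : ℕ} (hi : i < lam.length) :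
    (lam.map (· + mu.getD 0 0) ++ mu.tail).getD i 0 = lam.getD i 0 + mu.getD 0 0 := by
  have h1 : i < (lam.map (· + mu.getD 0 0) ++ mu.tail).length := by simp; omega
  have h2 : i < (lam.map (· + mu.getD 0 0)).length := by simpa using hi
  rw [List.getD_eq_getElem _ 0 h1, List.getElem_append_left h2, List.getElem_map,
    List.getD_eq_getElem _ 0 hi]

lemma L2_getD_high {i : ℕ} (hi : lam.length ≤ i) (hi2 : i < lam.length + mu.length - 1) :
    (lam.map (· + mu.getD 0 0) ++ mu.tail).getD i 0 = mu.getD (i - lam.length + 1) 0 := by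
  have h1 : i < (lam.map (· + mu.getD 0 0) ++ mu.tail).length := by simp; omega
  have h2 : (lam.map (· + mu.getD 0 0)).length ≤ i := by simpa using hi
  rw [List.getD_eq_getElem _ 0 h1, List.getElem_append_right h2]
  simp only [List.length_map]
  rw [List.getElem_tail]
  exact (List.getD_eq_getElem mu 0 (by simp at h1; omega)).symm

lemma R2_getD (i : ℕ) :
    (List.replicate (lam.length - 1) (mu.getD 0 0)).getD i 0 =
      if i < lam.length - 1 then mu.getD 0 0 else 0 := by
  by_cases h : i < lam.length - 1
  · rw [if_pos h, List.getD_eq_getElem _ 0 (by simpa using h), List.getElem_replicate]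
  · rw [if_neg h, List.getD_eq_default _ 0 (by simpa using h)]

lemma mu_le_head (hmu : List.Pairwise (· ≥ ·) mu) {s : ℕ} (hs : s < mu.length) :
    mu.getD s 0 ≤ mu.getD 0 0 := by
  have h0 : 0 < mu.length := by omega
  rw [List.getD_eq_getElem _ 0 hs, List.getD_eq_getElem _ 0 h0]
  rcases Nat.eq_zero_or_pos s with rfl | hpos
  · exact le_refl _
  · exact List.pairwise_iff_getElem.mp hmu 0 s h0 hs hpos

lemma intervalBlocks_cast {n M M' : ℕ} (h : M = M') (A : Fin M' → ℕ) :
    intervalBlocks n (fun x : Fin M => A (Fin.cast h x)) = intervalBlocks n A := by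
  subst h
  rfl

lemma sum_toNat_bet (lam : List ℕ) (ε : Equiv.Perm (Fin lam.length))
    (hpos : ∀ i, 0 ≤ bet lam [] ε i) :
    ∑ i, (bet lam [] ε i).toNat = lam.sum := by
  have hz : (↑(∑ i, (bet lam [] ε i).toNat) : ℤ) = ∑ i, bet lam [] ε i := by
    rw [Nat.cast_sum]
    exact Finset.sum_congr rfl fun i _ => Int.toNat_of_nonneg (hpos i)
  have hperm : (∑ x : Fin lam.length, (((ε x : Fin lam.length) : ℕ) : ℤ)) =
      ∑ x : Fin lam.length, ((x : ℕ) : ℤ) :=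
    Equiv.sum_comp ε (fun j => ((j : ℕ) : ℤ))
  have hgd : (∑ x : Fin lam.length, (lam.getD (x : ℕ) 0)) = lam.sum := by
    conv_rhs => rw [← List.ofFn_get lam]
    rw [List.sum_ofFn]
    exact Finset.sum_congr rfl fun x _ => by
      rw [List.getD_eq_getElem _ 0 x.isLt, List.get_eq_getElem]
  have hgdz : (∑ x : Fin lam.length, (lam.getD (x : ℕ) 0 : ℤ)) = (lam.sum : ℤ) := by
    rw [← Nat.cast_sum]
    exact_mod_cast congrArg (Nat.cast : ℕ → ℤ) hgd
  have hsum : (∑ i, bet lam [] ε i) = (lam.sum : ℤ) := by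
    unfold bet
    simp only [List.getD_nil, Nat.cast_zero, sub_zero]
    rw [Finset.sum_sub_distrib, Finset.sum_add_distrib, hperm]
    omega
  omega

end ListLemmas


section BetFormulas
variable (lam mu : List ℕ)

lemma betnil_formula {M : ℕ} (L : List ℕ) (ε : Equiv.Perm (Fin M)) (x : Fin M) :
    bet L [] ε x = (L.getD (x : ℕ) 0 : ℤ) + ((ε x : Fin M) : ℕ) - ((x : ℕ) : ℤ) := by
  simp [bet, List.getD_nil]

lemma bet1_formula (hq : 0 < mu.getD 0 0) (hk : 0 < mu.length)
    {M : ℕ} (hM : M = lam.length + mu.length)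
    (τ : Equiv.Perm (Fin M)) (x : Fin M) :
    bet (lam.map (· + mu.getD 0 0 - 1) ++ mu) (List.replicate lam.length (mu.getD 0 0 - 1)) τ x =
      (if (x : ℕ) < lam.length then (lam.getD (x : ℕ) 0 : ℤ) + (mu.getD 0 0 : ℕ) - 1
        else (mu.getD ((x : ℕ) - lam.length) 0 : ℤ))
      - (if ((τ x : Fin M) : ℕ) < lam.length then ((mu.getD 0 0 : ℕ) : ℤ) - 1 else 0)
      + ((τ x : Fin M) : ℕ) - ((x : ℕ) : ℤ) := by
  unfold bet
  rw [R1_getD]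
  by_cases hx : (x : ℕ) < lam.length
  · rw [L1_getD_low lam mu hx, if_pos hx]
    by_cases hτ : ((τ x : Fin M) : ℕ) < lam.length
    · rw [if_pos hτ, if_pos hτ]
      try omega
    · rw [if_neg hτ, if_neg hτ]
      try omega
  · have hx2 : (x : ℕ) < lam.length + mu.length := by have := x.isLt; omega
    rw [L1_getD_high lam mu (by omega) hx2, if_neg hx]
    by_cases hτ : ((τ x : Fin M) : ℕ) < lam.length
    · rw [if_pos hτ, if_pos hτ]
      try omega
    · rw [if_neg hτ, if_neg hτ]
      try omega

lemma bet2_formula (hq : 0 < mu.getD 0 0) (hk : 0 < mu.length)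
    {M : ℕ} (hM : M = lam.length + mu.length - 1)
    (σ : Equiv.Perm (Fin M)) (x : Fin M) :
    bet (lam.map (· + mu.getD 0 0) ++ mu.tail) (List.replicate (lam.length - 1) (mu.getD 0 0)) σ x =
      (if (x : ℕ) < lam.length then (lam.getD (x : ℕ) 0 : ℤ) + (mu.getD 0 0 : ℕ)
        else (mu.getD ((x : ℕ) - lam.length + 1) 0 : ℤ))
      - (if ((σ x : Fin M) : ℕ) < lam.length - 1 then ((mu.getD 0 0 : ℕ) : ℤ) else 0)
      + ((σ x : Fin M) : ℕ) - ((x : ℕ) : ℤ) := by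
  unfold bet
  rw [R2_getD]
  by_cases hx : (x : ℕ) < lam.length
  · rw [L2_getD_low lam mu hx, if_pos hx]
    by_cases hσ : ((σ x : Fin M) : ℕ) < lam.length - 1
    · rw [if_pos hσ, if_pos hσ]
      try omega
    · rw [if_neg hσ, if_neg hσ]
      try omega
  · have hx2 : (x : ℕ) < lam.length + mu.length - 1 := by have := x.isLt; omega
    rw [L2_getD_high lam mu (by omega) hx2, if_neg hx]
    by_cases hσ : ((σ x : Fin M) : ℕ) < lam.length - 1
    · rw [if_pos hσ, if_pos hσ]
      try omega
    · rw [if_neg hσ, if_neg hσ]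
      try omega

lemma succAbove_val {L : ℕ} (c : Fin (L + 1)) (i : Fin L) :
    ((c.succAbove i : Fin (L + 1)) : ℕ) = if (i : ℕ) < (c : ℕ) then (i : ℕ) else (i : ℕ) + 1 := by
  by_cases hi : (i : ℕ) < (c : ℕ)
  · rw [if_pos hi, Fin.succAbove_of_castSucc_lt _ _ (by rw [Fin.lt_def]; simpa using hi)]
    simp
  · rw [if_neg hi, Fin.succAbove_of_le_castSucc _ _ (by rw [Fin.le_def]; simp; omega)]
    simp

end BetFormulas


section TermLemmas

lemma term_zero (N nm : ℕ) (dd : Fin nm → Fin nm) (lam mu : List ℕ)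
    (hq : 0 < mu.getD 0 0) (hk : 0 < mu.length) (hl : 0 < lam.length)
    (hmus : List.Pairwise (· ≥ ·) mu)
    {M : ℕ} (hM : M = lam.length + mu.length)
    (τ : Equiv.Perm (Fin M))
    (x : Fin M) (hx : lam.length ≤ (x : ℕ)) (hτx : ((τ x : Fin M) : ℕ) < lam.length)
    (hne : ¬((x : ℕ) = lam.length ∧ ((τ x : Fin M) : ℕ) = lam.length - 1)) :
    sNCMterm N nm dd (lam.map (· + mu.getD 0 0 - 1) ++ mu)
      (List.replicate lam.length (mu.getD 0 0 - 1)) τ = 0 := by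
  unfold sNCMterm
  rw [if_neg]
  push_neg
  refine ⟨x, ?_⟩
  rw [bet1_formula lam mu hq hk hM, if_neg (by omega), if_pos hτx]
  have hs : mu.getD ((x : ℕ) - lam.length) 0 ≤ mu.getD 0 0 :=
    mu_le_head mu hmus (by have := x.isLt; omega)
  omega

lemma term_P (N : ℕ) {n m : ℕ} (δ : Equiv.Perm (Fin n)) (η : Equiv.Perm (Fin m))
    (lam mu : List ℕ)
    (hq : 0 < mu.getD 0 0) (hk : 0 < mu.length)
    (hlsum : lam.sum = n) (hmsum : mu.sum = m)
    {M : ℕ} (hM : M = lam.length + mu.length)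
    (p : Equiv.Perm (Fin lam.length) × Equiv.Perm (Fin mu.length)) :
    sNCMterm N (n + m) (⇑(shiftConcat δ η)) (lam.map (· + mu.getD 0 0 - 1) ++ mu)
        (List.replicate lam.length (mu.getD 0 0 - 1)) (toP hM p) =
      sNCMterm N n (⇑δ) lam [] p.1 * sNCMterm N m (⇑η) mu [] p.2 := by
  have elow : ∀ (x : Fin M) (hx : (x : ℕ) < lam.length),
      bet (lam.map (· + mu.getD 0 0 - 1) ++ mu) (List.replicate lam.length (mu.getD 0 0 - 1))
        (toP hM p) x = bet lam [] p.1 ⟨(x : ℕ), hx⟩ := by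
    intro x hx
    rw [bet1_formula lam mu hq hk hM, betnil_formula, toP_val_low hM p x hx, if_pos hx,
      if_pos (p.1 ⟨(x : ℕ), hx⟩).isLt]
    simp only [Fin.val_mk]
    omega
  have ehigh : ∀ (x : Fin M) (hx : lam.length ≤ (x : ℕ)),
      bet (lam.map (· + mu.getD 0 0 - 1) ++ mu) (List.replicate lam.length (mu.getD 0 0 - 1))
        (toP hM p) x =
        bet mu [] p.2 ⟨(x : ℕ) - lam.length, by have := x.isLt; omega⟩ := by
    intro x hx
    rw [bet1_formula lam mu hq hk hM, betnil_formula, toP_val_high hM p x hx,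
      if_neg (not_lt.2 hx), if_neg (by omega)]
    simp only [Fin.val_mk]
    omega
  have hcond : (∀ x, 0 ≤ bet (lam.map (· + mu.getD 0 0 - 1) ++ mu)
        (List.replicate lam.length (mu.getD 0 0 - 1)) (toP hM p) x) ↔
      ((∀ i, 0 ≤ bet lam [] p.1 i) ∧ ∀ i, 0 ≤ bet mu [] p.2 i) := by
    constructor
    · intro h
      constructor
      · intro i
        have hi : (i : ℕ) < M := by have := i.isLt; omega
        have hx := h ⟨(i : ℕ), hi⟩
        rw [elow ⟨(i : ℕ), hi⟩ i.isLt] at hx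
        exact hx
      · intro i
        have hi : lam.length + (i : ℕ) < M := by have := i.isLt; omega
        have hx := h ⟨lam.length + (i : ℕ), hi⟩
        rw [ehigh _ (Nat.le_add_right _ _)] at hx
        simp only [Fin.val_mk, Nat.add_sub_cancel_left] at hx
        exact hx
    · rintro ⟨h1, h2⟩ x
      by_cases hx : (x : ℕ) < lam.length
      · rw [elow x hx]; exact h1 _
      · push_neg at hx
        rw [ehigh x hx]; exact h2 _
  unfold sNCMterm
  by_cases hc : ∀ x, 0 ≤ bet (lam.map (· + mu.getD 0 0 - 1) ++ mu)
      (List.replicate lam.length (mu.getD 0 0 - 1)) (toP hM p) x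
  · have hA := (hcond.1 hc).1
    have hB := (hcond.1 hc).2
    rw [if_pos hc, if_pos hA, if_pos hB]
    rw [smul_mul_assoc, mul_smul_comm, smul_smul]
    have hs1 : ∑ j, (fun i => (bet lam [] p.1 i).toNat) j = n := by
      rw [sum_toNat_bet lam p.1 hA]; exact hlsum
    have hs2 : ∑ j, (fun i => (bet mu [] p.2 i).toNat) j = m := by
      rw [sum_toNat_bet mu p.2 hB]; exact hmsum
    congr 1
    · -- scalars
      rw [sign_toP]
      have hprod : (∏ x : Fin M, (1 : ℚ) / ((bet (lam.map (· + mu.getD 0 0 - 1) ++ mu)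
            (List.replicate lam.length (mu.getD 0 0 - 1)) (toP hM p) x).toNat.factorial : ℚ)) =
          (∏ i : Fin lam.length, 1 / ((bet lam [] p.1 i).toNat.factorial : ℚ)) *
            ∏ i : Fin mu.length, 1 / ((bet mu [] p.2 i).toNat.factorial : ℚ) := by
        have step1 : (∏ x : Fin M, (1 : ℚ) / ((bet (lam.map (· + mu.getD 0 0 - 1) ++ mu)
              (List.replicate lam.length (mu.getD 0 0 - 1)) (toP hM p) x).toNat.factorial : ℚ)) =
            ∏ j : Fin (lam.length + mu.length),
              (1 : ℚ) / (((Fin.append (fun i => (bet lam [] p.1 i).toNat)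
                (fun i => (bet mu [] p.2 i).toNat)) j).factorial : ℚ) := by
          apply Fintype.prod_equiv (finCongr hM)
          intro x
          by_cases hx : (x : ℕ) < lam.length
          · have hcx : finCongr hM x = Fin.castAdd mu.length ⟨(x : ℕ), hx⟩ := Fin.ext rfl
            rw [hcx, Fin.append_left, elow x hx]
          · push_neg at hx
            have hcx : finCongr hM x =
                Fin.natAdd lam.length ⟨(x : ℕ) - lam.length, by have := x.isLt; omega⟩ := by
              refine Fin.ext ?_
              simp only [finCongr_apply, Fin.coe_cast, Fin.coe_natAdd, Fin.val_mk]
              omega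
            rw [hcx, Fin.append_right, ehigh x hx]
        rw [step1, Fin.prod_univ_add]
        congr 1
        · exact Finset.prod_congr rfl fun i _ => by rw [Fin.append_left]
        · exact Finset.prod_congr rfl fun i _ => by rw [Fin.append_right]
      rw [hprod]
      push_cast [Units.val_mul]
      ring
    · -- hNC
      have hfun : (fun x : Fin M => (bet (lam.map (· + mu.getD 0 0 - 1) ++ mu)
            (List.replicate lam.length (mu.getD 0 0 - 1)) (toP hM p) x).toNat) =
          fun x : Fin M => (Fin.append (fun i => (bet lam [] p.1 i).toNat)
            (fun i => (bet mu [] p.2 i).toNat)) (Fin.cast hM x) := by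
        funext x
        by_cases hx : (x : ℕ) < lam.length
        · have hcx : Fin.cast hM x = Fin.castAdd mu.length ⟨(x : ℕ), hx⟩ := Fin.ext rfl
          rw [hcx, Fin.append_left, elow x hx]
        · push_neg at hx
          have hcx : Fin.cast hM x =
              Fin.natAdd lam.length ⟨(x : ℕ) - lam.length, by have := x.isLt; omega⟩ := by
            refine Fin.ext ?_
            simp only [Fin.coe_cast, Fin.coe_natAdd, Fin.val_mk]
            omega
          rw [hcx, Fin.append_right, ehigh x hx]
      rw [hfun, intervalBlocks_cast hM, intervalBlocks_append _ _ hs1, applyMap_union,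
        applyMap_image _ _ ⇑δ (shiftConcat_castAdd δ η),
        applyMap_image _ _ ⇑η (shiftConcat_natAdd δ η)]
      exact hNC_mul_split
        (fun j => exists_mem_applyMap δ.surjective
          (fun x => exists_mem_intervalBlocks _ hs1 x) j)
        (fun j => exists_mem_applyMap η.surjective
          (fun x => exists_mem_intervalBlocks _ hs2 x) j)
  · rw [if_neg hc]
    have hnab : ¬((∀ i, 0 ≤ bet lam [] p.1 i) ∧ ∀ i, 0 ≤ bet mu [] p.2 i) :=
      fun h => hc (hcond.2 h)
    by_cases hA : ∀ i, 0 ≤ bet lam [] p.1 i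
    · rw [if_neg (fun hB => hnab ⟨hA, hB⟩), mul_zero]
    · rw [if_neg hA, zero_mul]

end TermLemmas


lemma term_Q (N nm : ℕ) (dd : Fin nm → Fin nm) (lam mu : List ℕ)
    (hq : 0 < mu.getD 0 0) (hk : 0 < mu.length) (hl : 0 < lam.length)
    {L : ℕ} (hL : L = lam.length + mu.length - 1)
    (a b : Fin (L + 1)) (ha : (a : ℕ) = lam.length) (hb : (b : ℕ) = lam.length - 1)
    (σ : Equiv.Perm (Fin L)) :
    sNCMterm N nm dd (lam.map (· + mu.getD 0 0 - 1) ++ mu)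
        (List.replicate lam.length (mu.getD 0 0 - 1)) (toQ a b σ) =
      - sNCMterm N nm dd (lam.map (· + mu.getD 0 0) ++ mu.tail)
        (List.replicate (lam.length - 1) (mu.getD 0 0)) σ := by
  have hab : (a : ℕ) = (b : ℕ) + 1 := by omega
  have hM1 : L + 1 = lam.length + mu.length := by omega
  have beta_a : bet (lam.map (· + mu.getD 0 0 - 1) ++ mu)
      (List.replicate lam.length (mu.getD 0 0 - 1)) (toQ a b σ) a = 0 := by
    rw [bet1_formula lam mu hq hk hM1, toQ_apply_self, if_neg (by omega), if_pos (by omega),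
      show (a : ℕ) - lam.length = 0 from by omega]
    omega
  have beta_sab : ∀ i : Fin L,
      bet (lam.map (· + mu.getD 0 0 - 1) ++ mu)
        (List.replicate lam.length (mu.getD 0 0 - 1)) (toQ a b σ) (a.succAbove i) =
      bet (lam.map (· + mu.getD 0 0) ++ mu.tail)
        (List.replicate (lam.length - 1) (mu.getD 0 0)) σ i := by
    intro i
    rw [bet1_formula lam mu hq hk hM1, bet2_formula lam mu hq hk hL,
      toQ_apply_succAbove a b hab, succAbove_val a i, succAbove_val b (σ i), ha, hb]
    split_ifs <;>
      first
        | omega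
        | (rw [show (i : ℕ) + 1 - lam.length = (i : ℕ) - lam.length + 1 from by omega]; omega)
  have hcond : (∀ x, 0 ≤ bet (lam.map (· + mu.getD 0 0 - 1) ++ mu)
        (List.replicate lam.length (mu.getD 0 0 - 1)) (toQ a b σ) x) ↔
      ∀ i, 0 ≤ bet (lam.map (· + mu.getD 0 0) ++ mu.tail)
        (List.replicate (lam.length - 1) (mu.getD 0 0)) σ i := by
    constructor
    · intro h i
      rw [← beta_sab i]
      exact h _
    · intro h x
      by_cases hx : x = a
      · subst hx
        rw [beta_a]
      · obtain ⟨i, rfl⟩ := Fin.exists_succAbove_eq hx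
        rw [beta_sab i]
        exact h i
  unfold sNCMterm
  by_cases hc : ∀ i, 0 ≤ bet (lam.map (· + mu.getD 0 0) ++ mu.tail)
      (List.replicate (lam.length - 1) (mu.getD 0 0)) σ i
  · rw [if_pos (hcond.2 hc), if_pos hc, ← neg_smul]
    congr 1
    · rw [sign_toQ a b hab]
      have hprod : (∏ x : Fin (L + 1), (1 : ℚ) / ((bet (lam.map (· + mu.getD 0 0 - 1) ++ mu)
            (List.replicate lam.length (mu.getD 0 0 - 1)) (toQ a b σ) x).toNat.factorial : ℚ)) =
          ∏ i : Fin L, 1 / ((bet (lam.map (· + mu.getD 0 0) ++ mu.tail)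
            (List.replicate (lam.length - 1) (mu.getD 0 0)) σ i).toNat.factorial : ℚ) := by
        rw [Fin.prod_univ_succAbove _ a]
        have h1 : (1 : ℚ) / ((bet (lam.map (· + mu.getD 0 0 - 1) ++ mu)
            (List.replicate lam.length (mu.getD 0 0 - 1)) (toQ a b σ) a).toNat.factorial : ℚ)
            = 1 := by
          rw [beta_a]
          norm_num
        rw [h1, one_mul]
        exact Finset.prod_congr rfl fun i _ => by rw [beta_sab i]
      rw [hprod]
      push_cast [Units.val_neg]
      ring
    · have hib : (intervalBlocks nm fun x : Fin (L + 1) =>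
          (bet (lam.map (· + mu.getD 0 0 - 1) ++ mu)
            (List.replicate lam.length (mu.getD 0 0 - 1)) (toQ a b σ) x).toNat) =
          intervalBlocks nm fun i : Fin L =>
            (bet (lam.map (· + mu.getD 0 0) ++ mu.tail)
              (List.replicate (lam.length - 1) (mu.getD 0 0)) σ i).toNat := by
        rw [intervalBlocks_erase_zero _ a (by rw [beta_a]; rfl)]
        congr 1
        funext j
        rw [beta_sab j]
      rw [hib]
  · rw [if_neg hc, if_neg (fun h => hc (hcond.1 h)), neg_zero]

/-- `s_{(δ,λ)} · s_{(η,μ)} = s_{(δ|η, λ·μ)} + s_{(δ|η, λ⊙μ)}`. -/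
theorem schur_product_rule (N n m : ℕ) (hN : 0 < N)
    (δ : Equiv.Perm (Fin n)) (η : Equiv.Perm (Fin m)) (lam mu : List ℕ)
    (hlam : IsPartitionList lam) (hmu : IsPartitionList mu)
    (hlsum : lam.sum = n) (hmsum : mu.sum = m) (hn : 1 ≤ n) (hm : 1 ≤ m) :
    sNC N n (⇑δ) lam [] * sNC N m (⇑η) mu [] =
      sNC N (n + m) (⇑(shiftConcat δ η)) (lam.map (· + mu.getD 0 0 - 1) ++ mu)
          (List.replicate lam.length (mu.getD 0 0 - 1)) +
        sNC N (n + m) (⇑(shiftConcat δ η)) (lam.map (· + mu.getD 0 0) ++ mu.tail)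
          (List.replicate (lam.length - 1) (mu.getD 0 0)) := by
  have hl : 0 < lam.length := by
    by_contra h
    push_neg at h
    have hnil : lam = [] := List.length_eq_zero_iff.1 (by omega)
    rw [hnil] at hlsum
    simp at hlsum
    omega
  have hk : 0 < mu.length := by
    by_contra h
    push_neg at h
    have hnil : mu = [] := List.length_eq_zero_iff.1 (by omega)
    rw [hnil] at hmsum
    simp at hmsum
    omega
  have hq : 0 < mu.getD 0 0 := by
    rcases mu with _ | ⟨c, t⟩
    · simp at hk
    · exact hmu.2 c (by simp)
  have hM1len : lam.length + mu.length - 1 + 1 = (lam.map (· + mu.getD 0 0 - 1) ++ mu).length := by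
    simp
    omega
  have hM2len : lam.length + mu.length - 1 = (lam.map (· + mu.getD 0 0) ++ mu.tail).length := by
    simp
    omega
  have hM : lam.length + mu.length - 1 + 1 = lam.length + mu.length := by omega
  rw [sNC_eq_sNCM N n (⇑δ) lam [] rfl, sNC_eq_sNCM N m (⇑η) mu [] rfl,
    sNC_eq_sNCM N (n + m) _ _ _ hM1len, sNC_eq_sNCM N (n + m) _ _ _ hM2len]
  set L : ℕ := lam.length + mu.length - 1 with hLdef
  set a : Fin (L + 1) := ⟨lam.length, by omega⟩ with hadef
  set b : Fin (L + 1) := ⟨lam.length - 1, by omega⟩ with hbdef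
  have ha : (a : ℕ) = lam.length := rfl
  have hb : (b : ℕ) = lam.length - 1 := rfl
  have hQsum : (∑ τ ∈ Finset.univ.filter (fun τ : Equiv.Perm (Fin (L + 1)) => τ a = b),
      sNCMterm N (n + m) (⇑(shiftConcat δ η)) (lam.map (· + mu.getD 0 0 - 1) ++ mu)
        (List.replicate lam.length (mu.getD 0 0 - 1)) τ) =
      - ∑ σ : Equiv.Perm (Fin L),
        sNCMterm N (n + m) (⇑(shiftConcat δ η)) (lam.map (· + mu.getD 0 0) ++ mu.tail)
          (List.replicate (lam.length - 1) (mu.getD 0 0)) σ := by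
    rw [← Finset.sum_neg_distrib]
    refine (Finset.sum_bij (fun (σ : Equiv.Perm (Fin L)) (_ : σ ∈ Finset.univ) => toQ a b σ)
      ?_ ?_ ?_ ?_).symm
    · intro σ _
      simp only [Finset.mem_filter, Finset.mem_univ, true_and]
      exact toQ_apply_self a b σ
    · intro σ _ τ _ h
      exact toQ_inj a b (by omega) h
    · intro τ hτ
      simp only [Finset.mem_filter, Finset.mem_univ, true_and] at hτ
      obtain ⟨σ, hσ⟩ := toQ_surj a b (by omega) τ hτ
      exact ⟨σ, Finset.mem_univ σ, hσ⟩
    · intro σ _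
      rw [term_Q N (n + m) _ lam mu hq hk hl hLdef a b ha hb σ]
  have hPmem : ∀ p : Equiv.Perm (Fin lam.length) × Equiv.Perm (Fin mu.length),
      ∀ i : Fin (L + 1), lam.length ≤ (i : ℕ) → lam.length ≤ ((toP hM p i : Fin (L + 1)) : ℕ) := by
    intro p i hi
    rw [toP_val_high hM p i hi]
    exact Nat.le_add_right _ _
  have hnotQsum : (∑ τ ∈ Finset.univ.filter (fun τ : Equiv.Perm (Fin (L + 1)) => ¬ τ a = b),
      sNCMterm N (n + m) (⇑(shiftConcat δ η)) (lam.map (· + mu.getD 0 0 - 1) ++ mu)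
        (List.replicate lam.length (mu.getD 0 0 - 1)) τ) =
      ∑ p : Equiv.Perm (Fin lam.length) × Equiv.Perm (Fin mu.length),
        sNCMterm N (n + m) (⇑(shiftConcat δ η)) (lam.map (· + mu.getD 0 0 - 1) ++ mu)
          (List.replicate lam.length (mu.getD 0 0 - 1)) (toP hM p) := by
    rw [← Finset.sum_filter_add_sum_filter_not
      (Finset.univ.filter (fun τ : Equiv.Perm (Fin (L + 1)) => ¬ τ a = b))
      (fun τ => ∀ i : Fin (L + 1), lam.length ≤ (i : ℕ) → lam.length ≤ ((τ i : Fin (L + 1)) : ℕ))]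
    have hzero : (∑ τ ∈ (Finset.univ.filter (fun τ : Equiv.Perm (Fin (L + 1)) => ¬ τ a = b)).filter
        (fun τ => ¬ ∀ i : Fin (L + 1), lam.length ≤ (i : ℕ) →
          lam.length ≤ ((τ i : Fin (L + 1)) : ℕ)),
        sNCMterm N (n + m) (⇑(shiftConcat δ η)) (lam.map (· + mu.getD 0 0 - 1) ++ mu)
          (List.replicate lam.length (mu.getD 0 0 - 1)) τ) = 0 := by
      apply Finset.sum_eq_zero
      intro τ hτ
      simp only [Finset.mem_filter, Finset.mem_univ, true_and] at hτ
      obtain ⟨hτQ, hτP⟩ := hτ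
      push_neg at hτP
      obtain ⟨x, hx1, hx2⟩ := hτP
      refine term_zero N (n + m) _ lam mu hq hk hl hmu.1 (by omega) τ x hx1 hx2 ?_
      rintro ⟨he1, he2⟩
      exact hτQ (by
        have hxa : x = a := Fin.ext (by rw [ha]; exact he1)
        have : τ x = b := Fin.ext (by rw [hb]; exact he2)
        rw [← hxa]
        exact this)
    rw [hzero, add_zero]
    have hPP : (Finset.univ.filter (fun τ : Equiv.Perm (Fin (L + 1)) => ¬ τ a = b)).filter
        (fun τ => ∀ i : Fin (L + 1), lam.length ≤ (i : ℕ) →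
          lam.length ≤ ((τ i : Fin (L + 1)) : ℕ)) =
        Finset.univ.filter (fun τ : Equiv.Perm (Fin (L + 1)) =>
          ∀ i : Fin (L + 1), lam.length ≤ (i : ℕ) → lam.length ≤ ((τ i : Fin (L + 1)) : ℕ)) := by
      rw [Finset.filter_filter]
      apply Finset.filter_congr
      intro τ _
      constructor
      · rintro ⟨_, h⟩; exact h
      · intro h
        refine ⟨?_, h⟩
        intro hab'
        have := h a (le_of_eq ha.symm)
        rw [hab'] at this
        rw [hb] at this
        omega
    rw [hPP]
    refine (Finset.sum_bij
      (fun (p : Equiv.Perm (Fin lam.length) × Equiv.Perm (Fin mu.length))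
        (_ : p ∈ Finset.univ) => toP hM p) ?_ ?_ ?_ ?_).symm
    · intro p _
      simp only [Finset.mem_filter, Finset.mem_univ, true_and]
      exact hPmem p
    · intro p _ q _ h
      exact toP_inj hM h
    · intro τ hτ
      simp only [Finset.mem_filter, Finset.mem_univ, true_and] at hτ
      obtain ⟨p, hp⟩ := toP_surj hM τ hτ
      exact ⟨p, Finset.mem_univ p, hp⟩
    · intro p _
      rfl
  show sNCM N n (⇑δ) lam [] lam.length * sNCM N m (⇑η) mu [] mu.length = _
  unfold sNCM
  rw [← Finset.sum_filter_add_sum_filter_not Finset.univ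
    (fun τ : Equiv.Perm (Fin (L + 1)) => τ a = b)]
  rw [hQsum, hnotQsum, Finset.sum_mul_sum]
  have hfinal : (∑ p : Equiv.Perm (Fin lam.length) × Equiv.Perm (Fin mu.length),
      sNCMterm N (n + m) (⇑(shiftConcat δ η)) (lam.map (· + mu.getD 0 0 - 1) ++ mu)
        (List.replicate lam.length (mu.getD 0 0 - 1)) (toP hM p)) =
      ∑ ε : Equiv.Perm (Fin lam.length), ∑ ζ : Equiv.Perm (Fin mu.length),
        sNCMterm N n (⇑δ) lam [] ε * sNCMterm N m (⇑η) mu [] ζ := by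
    rw [Fintype.sum_prod_type]
    apply Finset.sum_congr rfl
    intro ε _
    apply Finset.sum_congr rfl
    intro ζ _
    exact term_P N δ η lam mu hq hk hlsum hmsum hM (ε, ζ)
  rw [hfinal]
  abel

end NCSymPaper
end
end

section
/- For every composition α of n ≥ 1, the source ribbon Schur function in noncommuting variables satisfies r_{[α]} = (−1)^{ℓ(α)} Σ_{β ≽ α} (−1)^{ℓ(β)} (1/β!) h_{[β]} in F = FreeAlgebra ℚ (Fin N), where the sum is over all coarsenings β of α. -/
open scoped BigOperators Classical

noncomputable section

namespace NCSymPaper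

/-- The outer shape of the ribbon diagram of a composition `α`:
`λ_k = α_k` and `λ_i = α_i + λ_{i+1} − 1`. -/
def ribbonOuter : List ℕ → List ℕ
  | [] => []
  | a :: rest =>
    match ribbonOuter rest with
    | [] => [a]
    | b :: t => (a + b - 1) :: b :: t

/-- The inner shape of the ribbon diagram of `α`: `μ_i = λ_{i+1} − 1`, `μ_k = 0`. -/
def ribbonInner (α : List ℕ) : List ℕ :=
  (ribbonOuter α).tail.map (· - 1)

/-- The source ribbon Schur function in noncommuting variables `r_{[α]}`. -/
def ribbonNC (N n : ℕ) (α : List ℕ) : FreeAlgebra ℚ (Fin N) :=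
  sNC N n id (ribbonOuter α) (ribbonInner α)

/-- All coarsenings of a composition. -/
def coarsenList : List ℕ → List (List ℕ)
  | [] => [[]]
  | a :: rest =>
    (coarsenList rest).flatMap fun β =>
      match β with
      | [] => [[a]]
      | b :: t => [a :: b :: t, (a + b) :: t]

/-- The set partition `[β]` of `[n]` into consecutive intervals of sizes given by `β`. -/
def intervalBlocksL (n : ℕ) (β : List ℕ) : Finset (Finset (Fin n)) :=
  intervalBlocks n fun i : Fin β.length => β.get i

/-!
For the ribbon of `α` (0-indexed) one has `μ_j = λ_{j+1} - 1`, so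
`β(ε)_i = λ_i - λ_{ε(i)+1} + 1 + ε(i) - i`. As `λ` is weakly decreasing, `β(ε)_i` is positive
when `ε(i) ≥ i`, zero when `ε(i) = i - 1` and negative when `ε(i) < i - 1`: only the
Hessenberg permutations (`ε(i) ≥ i - 1` for all `i`) contribute. Deleting row `0` of such an
`ε` leaves a Hessenberg permutation `ε'` of the remaining rows, and either `ε(0) = 0`, when the
nonzero parts of `β(ε)` are `α₀` followed by those of `β(ε')`, or `ε(0) = ε'(0) + 1` and
`ε(1) = 0`, when `α₀` is merged into the first part of `β(ε')` and the sign flips. By induction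
on `ℓ(α)` the signed sum over Hessenberg permutations thus becomes the sum over the coarsenings
`β ≽ α`, each with sign `(-1)^{ℓ(α) + ℓ(β)}`.
-/

open Equiv Finset

section RibbonShape

variable {a : ℕ} {rest α : List ℕ}

lemma ribbonOuter_cons (a : ℕ) (rest : List ℕ) :
    ribbonOuter (a :: rest) = (a + (ribbonOuter rest).headD 1 - 1) :: ribbonOuter rest := by
  cases h : ribbonOuter rest <;> simp [ribbonOuter, h]

lemma length_ribbonOuter (α : List ℕ) : (ribbonOuter α).length = α.length := by
  induction α with
  | nil => rfl
  | cons a rest ih => simp [ribbonOuter_cons, ih]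

lemma isPartitionList_ribbonOuter (hα : ∀ x ∈ α, 0 < x) : IsPartitionList (ribbonOuter α) := by
  induction α with
  | nil => simp [ribbonOuter, IsPartitionList]
  | cons a rest ih =>
    obtain ⟨hsorted, hpos⟩ := ih fun x hx => hα x (List.mem_cons_of_mem _ hx)
    have ha : 0 < a := hα a List.mem_cons_self
    rw [IsPartitionList, ribbonOuter_cons]
    generalize ribbonOuter rest = L at hsorted hpos
    cases L with
    | nil => simpa using ha
    | cons b t =>
      have hb := hpos b List.mem_cons_self
      have hbt : ∀ x ∈ t, x ≤ b := fun x hx => List.rel_of_pairwise_cons hsorted hx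
      simp only [List.headD_cons, List.pairwise_cons, List.mem_cons, forall_eq_or_imp] at *
      refine ⟨⟨⟨by omega, fun x hx => by have := hbt x hx; omega⟩, hsorted⟩, by omega, hb, hpos.2⟩

lemma ribbonOuter_getD_antitone (hα : ∀ x ∈ α, 0 < x) :
    Antitone fun j => (ribbonOuter α).getD j 0 := by
  intro i j hij
  simp only
  by_cases hj : j < (ribbonOuter α).length
  · rw [List.getD_eq_getElem _ _ hj, List.getD_eq_getElem _ _ (hij.trans_lt hj)]
    rcases hij.eq_or_lt with rfl | hlt
    · rfl
    · exact (isPartitionList_ribbonOuter hα).1.rel_get_of_lt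
        (a := ⟨i, hij.trans_lt hj⟩) (b := ⟨j, hj⟩) hlt
  · rw [List.getD_eq_default _ _ (not_lt.1 hj)]
    exact Nat.zero_le _

lemma one_le_ribbonOuter_getD (hα : ∀ x ∈ α, 0 < x) {i : ℕ} (hi : i < α.length) :
    1 ≤ (ribbonOuter α).getD i 0 := by
  rw [← length_ribbonOuter] at hi
  rw [List.getD_eq_getElem _ _ hi]
  exact (isPartitionList_ribbonOuter hα).2 _ (List.getElem_mem hi)

lemma ribbonInner_getD (α : List ℕ) (j : ℕ) :
    (ribbonInner α).getD j 0 = (ribbonOuter α).getD (j + 1) 0 - 1 := by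
  rw [ribbonInner, ← Nat.zero_sub 1, List.getD_map]
  cases ribbonOuter α <;> simp

lemma ribbonOuter_cons_getD_succ (j : ℕ) :
    (ribbonOuter (a :: rest)).getD (j + 1) 0 = (ribbonOuter rest).getD j 0 := by
  rw [ribbonOuter_cons, List.getD_cons_succ]

lemma ribbonInner_cons_getD_succ (j : ℕ) :
    (ribbonInner (a :: rest)).getD (j + 1) 0 = (ribbonInner rest).getD j 0 := by
  rw [ribbonInner_getD, ribbonInner_getD, ribbonOuter_cons_getD_succ]

lemma ribbonOuter_cons_getD_zero (hrest : ∀ x ∈ rest, 0 < x) :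
    (ribbonOuter (a :: rest)).getD 0 0 = a + (ribbonInner (a :: rest)).getD 0 0 := by
  rw [ribbonInner_getD, ribbonOuter_cons_getD_succ, ribbonOuter_cons]
  cases rest with
  | nil => simp [ribbonOuter]
  | cons b t =>
    have := one_le_ribbonOuter_getD hrest (i := 0) (by simp)
    cases h : ribbonOuter (b :: t) with
    | nil => simp [h] at this
    | cons c u => simp only [h, List.getD_cons_zero, List.headD_cons] at this ⊢; omega

end RibbonShape

def IsHessenbergPerm {k : ℕ} (σ : Perm (Fin k)) : Prop :=
  ∀ i : Fin k, (i : ℕ) ≤ σ i + 1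

/-- `betaInt` for the ribbon of `α`, with `σ` acting on an arbitrary `Fin k` so that the
induction on `α` need not transport permutations along `length_ribbonOuter`. -/
def ribbonBeta (α : List ℕ) {k : ℕ} (σ : Perm (Fin k)) (i : Fin k) : ℤ :=
  ((ribbonOuter α).getD i 0 : ℤ) - ((ribbonInner α).getD (σ i) 0 : ℤ) + (σ i : ℤ) - (i : ℤ)

lemma betaInt_ribbon (α : List ℕ) (ε : Perm (Fin (ribbonOuter α).length))
    (i : Fin (ribbonOuter α).length) :
    betaInt (ribbonOuter α) (ribbonInner α) ε i = ribbonBeta α ε i := by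
  rw [betaInt, ribbonBeta, List.getD_eq_getElem _ _ i.isLt]
  rfl

section RibbonBeta

variable {α : List ℕ} {k : ℕ} {σ : Perm (Fin k)} {i : Fin k}

lemma ribbonBeta_eq (hα : ∀ x ∈ α, 0 < x) (h : (σ i : ℕ) + 1 < α.length) :
    ribbonBeta α σ i
      = (ribbonOuter α).getD i 0 - (ribbonOuter α).getD (σ i + 1) 0 + 1 + σ i - i := by
  have := one_le_ribbonOuter_getD hα h
  rw [ribbonBeta, ribbonInner_getD]
  push_cast [this]
  ring

lemma ribbonBeta_pos (hα : ∀ x ∈ α, 0 < x) (hk : k = α.length) (hi : (i : ℕ) ≤ σ i) :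
    0 < ribbonBeta α σ i := by
  by_cases h : (σ i : ℕ) + 1 < k
  · have := ribbonOuter_getD_antitone hα (show (i : ℕ) ≤ σ i + 1 by omega)
    simp only at this
    rw [ribbonBeta_eq hα (hk ▸ h)]
    omega
  · have := one_le_ribbonOuter_getD hα (i := i) (by omega)
    rw [ribbonBeta, ribbonInner_getD,
      List.getD_eq_default _ _ (n := σ i + 1) (by rw [length_ribbonOuter]; omega)]
    omega

lemma ribbonBeta_eq_zero (hα : ∀ x ∈ α, 0 < x) (hk : k = α.length) (hi : (σ i : ℕ) + 1 = i) :
    ribbonBeta α σ i = 0 := by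
  rw [ribbonBeta_eq hα (by omega), hi]
  omega

lemma ribbonBeta_neg (hα : ∀ x ∈ α, 0 < x) (hk : k = α.length) (hi : (σ i : ℕ) + 1 < i) :
    ribbonBeta α σ i < 0 := by
  have := ribbonOuter_getD_antitone hα hi.le
  simp only at this
  rw [ribbonBeta_eq hα (by omega)]
  omega

lemma ribbonBeta_nonneg_iff (hα : ∀ x ∈ α, 0 < x) (hk : k = α.length) :
    (∀ i, 0 ≤ ribbonBeta α σ i) ↔ IsHessenbergPerm σ := by
  refine forall_congr' fun i => ⟨fun h => ?_, fun h => ?_⟩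
  · by_contra hlt
    exact (ribbonBeta_neg hα hk (by omega)).not_ge h
  · rcases Nat.lt_or_ge (σ i : ℕ) i with hlt | hle
    · exact (ribbonBeta_eq_zero hα hk (by omega)).ge
    · exact (ribbonBeta_pos hα hk hle).le

end RibbonBeta

section Decompose

open Perm

variable {a b : ℕ} {rest t : List ℕ} {k : ℕ}

lemma ribbonBeta_cons_succ {σ : Perm (Fin (k + 1))} {e : Perm (Fin k)} {j : Fin k}
    (h : σ j.succ = (e j).succ) :
    ribbonBeta (a :: rest) σ j.succ = ribbonBeta rest e j := by
  rw [ribbonBeta, ribbonBeta, h, Fin.val_succ, Fin.val_succ, ribbonOuter_cons_getD_succ,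
    ribbonInner_cons_getD_succ]
  push_cast
  ring

lemma ribbonBeta_cons_zero_of_fixed (hrest : ∀ x ∈ rest, 0 < x) {σ : Perm (Fin (k + 1))}
    (h : σ 0 = 0) : ribbonBeta (a :: rest) σ 0 = a := by
  rw [ribbonBeta, h, Fin.val_zero, ribbonOuter_cons_getD_zero hrest]
  push_cast
  ring

lemma ribbonBeta_cons_zero_of_succ (hrest : ∀ x ∈ b :: t, 0 < x) {σ : Perm (Fin (k + 2))}
    {e : Perm (Fin (k + 1))} (h : σ 0 = (e 0).succ) :
    ribbonBeta (a :: b :: t) σ 0 = a + ribbonBeta (b :: t) e 0 := by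
  have hmu := ribbonInner_getD (a :: b :: t) 0
  have hlam := one_le_ribbonOuter_getD hrest (i := 0) (by simp)
  rw [ribbonOuter_cons_getD_succ] at hmu
  rw [ribbonBeta, ribbonBeta, h, Fin.val_zero, ribbonOuter_cons_getD_zero hrest, Fin.val_succ,
    ribbonInner_cons_getD_succ, hmu, Fin.val_zero]
  push_cast [hlam]
  ring

lemma isHessenbergPerm_decomposeFin_symm_iff {m : ℕ} (p : Fin (m + 2))
    (e : Perm (Fin (m + 1))) :
    IsHessenbergPerm (decomposeFin.symm (p, e)) ↔
      IsHessenbergPerm e ∧ (p = 0 ∨ p = (e 0).succ) := by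
  set σ := decomposeFin.symm (p, e)
  have hσ : ∀ j, σ j.succ = swap 0 p (e j).succ := decomposeFin_symm_apply_succ e p
  constructor
  · intro h
    have hj : ∀ j : Fin (m + 1), (j : ℕ) ≤ σ j.succ := fun j => by simpa using h j.succ
    refine ⟨fun j => (hj j).trans ?_, ?_⟩
    · rw [hσ]
      by_cases hjp : (e j).succ = p
      · simp [hjp]
      · simp [swap_apply_of_ne_of_ne (Fin.succ_ne_zero _) hjp]
    · rcases Fin.eq_zero_or_eq_succ p with rfl | ⟨q, rfl⟩
      · exact Or.inl rfl
      · have h0 : σ (e.symm q).succ = 0 := by rw [hσ, apply_symm_apply, swap_apply_right]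
        have hq : e.symm q = 0 := Fin.ext (by simpa [h0] using hj (e.symm q))
        rw [← hq, apply_symm_apply]
        exact Or.inr rfl
  · rintro ⟨he, hp⟩ i
    refine Fin.cases (by simp) (fun j => ?_) i
    rw [hσ]
    by_cases hjp : (e j).succ = p
    · obtain rfl : j = 0 := by
        rcases hp with rfl | hp
        · exact absurd hjp (Fin.succ_ne_zero _)
        · exact e.injective (Fin.succ_injective _ (hjp.trans hp))
      simp
    · simpa [swap_apply_of_ne_of_ne (Fin.succ_ne_zero _) hjp] using he j

/-- A Hessenberg permutation of `Fin (m + 2)` either fixes `0` or sends `1` to `0`. -/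
lemma sum_isHessenbergPerm_succ {M : Type*} [AddCommMonoid M] {m : ℕ}
    (f : Perm (Fin (m + 2)) → M) :
    ∑ σ with IsHessenbergPerm σ, f σ
      = ∑ e with IsHessenbergPerm e,
          (f (decomposeFin.symm (0, e)) + f (decomposeFin.symm ((e 0).succ, e))) := by
  rw [sum_filter, sum_filter, ← decomposeFin.symm.sum_comp, Fintype.sum_prod_type_right]
  refine sum_congr rfl fun e _ => ?_
  simp only [isHessenbergPerm_decomposeFin_symm_iff, ite_and]
  split_ifs
  · have hpair : univ.filter (fun p : Fin (m + 2) => p = 0 ∨ p = (e 0).succ) = {0, (e 0).succ} := by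
      ext; simp
    rw [← sum_filter, hpair, sum_pair (Fin.succ_ne_zero _).symm]
  · simp

end Decompose

def ribbonParts (α : List ℕ) {k : ℕ} (σ : Perm (Fin k)) : List ℕ :=
  (List.ofFn fun i => (ribbonBeta α σ i).toNat).filter (· ≠ 0)

def mergeHead (a : ℕ) : List ℕ → List ℕ
  | [] => [a]
  | b :: t => (a + b) :: t

section Parts

open Perm

variable {a b : ℕ} {rest t : List ℕ}

lemma ribbonParts_decomposeFin_zero (hα : ∀ x ∈ a :: rest, 0 < x) {k : ℕ} (e : Perm (Fin k)) :
    ribbonParts (a :: rest) (decomposeFin.symm (0, e)) = a :: ribbonParts rest e := by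
  have ha : a ≠ 0 := (hα a List.mem_cons_self).ne'
  have hσ : ∀ j, decomposeFin.symm (0, e) j.succ = (e j).succ := fun j => by
    rw [decomposeFin_symm_apply_succ, swap_self, refl_apply]
  rw [ribbonParts, List.ofFn_succ, ribbonBeta_cons_zero_of_fixed
    (fun x hx => hα x (List.mem_cons_of_mem _ hx)) (decomposeFin_symm_apply_zero _ _)]
  simp only [ribbonBeta_cons_succ (hσ _)]
  simp [ribbonParts, ha]

lemma ribbonParts_decomposeFin_succ (hα : ∀ x ∈ a :: b :: t, 0 < x)
    (e : Perm (Fin (t.length + 1))) :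
    ribbonParts (a :: b :: t) (decomposeFin.symm ((e 0).succ, e))
      = mergeHead a (ribbonParts (b :: t) e) := by
  have hrest : ∀ x ∈ b :: t, 0 < x := fun x hx => hα x (List.mem_cons_of_mem _ hx)
  set σ := decomposeFin.symm ((e 0).succ, e)
  have hσ : ∀ j : Fin t.length, σ j.succ.succ = (e j.succ).succ := fun j => by
    rw [decomposeFin_symm_apply_succ, swap_apply_of_ne_of_ne (Fin.succ_ne_zero _)
      (fun h => Fin.succ_ne_zero j (e.injective (Fin.succ_injective _ h)))]
  have h1 : σ (Fin.succ 0) = 0 := by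
    rw [decomposeFin_symm_apply_succ, swap_apply_right]
  have hpos : 0 < ribbonBeta (b :: t) e 0 := ribbonBeta_pos hrest rfl (Nat.zero_le _)
  rw [ribbonParts, ribbonParts, List.ofFn_succ, List.ofFn_succ, List.ofFn_succ,
    ribbonBeta_cons_zero_of_succ hrest (decomposeFin_symm_apply_zero _ _),
    ribbonBeta_eq_zero hα rfl (by rw [h1]; rfl)]
  have hhead : ((a : ℤ) + ribbonBeta (b :: t) e 0).toNat = a + (ribbonBeta (b :: t) e 0).toNat := by
    omega
  have hne : (ribbonBeta (b :: t) e 0).toNat ≠ 0 := by omega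
  simp only [ribbonBeta_cons_succ (hσ _), hhead, Int.toNat_zero]
  simp [mergeHead, hne]

end Parts

lemma ne_nil_of_mem_coarsenList_cons {a : ℕ} {rest β : List ℕ} (h : β ∈ coarsenList (a :: rest)) :
    β ≠ [] := by
  simp only [coarsenList, List.mem_flatMap] at h
  obtain ⟨γ, -, hγ⟩ := h
  rintro rfl
  cases γ <;> simp at hγ

lemma length_mergeHead (a : ℕ) {β : List ℕ} (h : β ≠ []) : (mergeHead a β).length = β.length := by
  cases β
  · exact absurd rfl h
  · rfl

lemma sum_map_coarsenList_cons_cons {M : Type*} [AddCommMonoid M] (a b : ℕ) (t : List ℕ)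
    (F : List ℕ → M) :
    ((coarsenList (a :: b :: t)).map F).sum
      = ((coarsenList (b :: t)).map fun β => F (a :: β) + F (mergeHead a β)).sum := by
  have hcons : coarsenList (a :: b :: t)
      = (coarsenList (b :: t)).flatMap fun β => [a :: β, mergeHead a β] := by
    refine List.flatMap_congr fun β hβ => ?_
    cases β with
    | nil => exact absurd rfl (ne_nil_of_mem_coarsenList_cons hβ)
    | cons c u => rfl
  rw [hcons, List.map_flatMap, List.flatMap_def, List.sum_flatten, List.map_map]
  simp [Function.comp_def]

open Perm in
theorem sum_isHessenbergPerm_ribbonParts {M : Type*} [AddCommGroup M] [Module ℚ M]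
    {α : List ℕ} (hα : ∀ x ∈ α, 0 < x) {k : ℕ} (hk : k = α.length) (G : List ℕ → M) :
    ∑ σ : Perm (Fin k) with IsHessenbergPerm σ, ((sign σ : ℤ) : ℚ) • G (ribbonParts α σ)
      = ((coarsenList α).map fun β => (-1 : ℚ) ^ (α.length + β.length) • G β).sum := by
  subst hk
  induction α generalizing G with
  | nil => simp [coarsenList, ribbonParts, IsHessenbergPerm]
  | cons a rest ih =>
    cases rest with
    | nil =>
      have hσ : ∀ σ : Perm (Fin 1), σ = decomposeFin.symm (0, 1) := fun σ => Subsingleton.elim _ _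
      refine (sum_eq_single_of_mem (decomposeFin.symm (0, 1)) ?_
        fun σ _ h => absurd (hσ σ) h).trans ?_
      · simp [IsHessenbergPerm, Perm.one_def]
      · rw [ribbonParts_decomposeFin_zero hα]
        simp [coarsenList, ribbonParts]
    | cons b t =>
      have hrest : ∀ x ∈ b :: t, 0 < x := fun x hx => hα x (List.mem_cons_of_mem _ hx)
      refine (sum_isHessenbergPerm_succ (m := t.length) _).trans ?_
      simp only [decomposeFin.symm_sign, ribbonParts_decomposeFin_zero hα,
        ribbonParts_decomposeFin_succ hα, if_true, Fin.succ_ne_zero, if_false, one_mul,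
        neg_one_mul, Units.val_neg, Int.cast_neg, neg_smul, ← sub_eq_add_neg, ← smul_sub]
      refine (ih hrest fun β => G (a :: β) - G (mergeHead a β)).trans ?_
      rw [sum_map_coarsenList_cons_cons]
      refine congrArg List.sum (List.map_congr_left fun β hβ => ?_)
      rw [length_mergeHead a (ne_nil_of_mem_coarsenList_cons hβ), smul_sub, sub_eq_add_neg,
        ← neg_smul]
      congr 2 <;> simp only [List.length_cons] <;> ring

section IntervalBlocks

def finIco (n s x : ℕ) : Finset (Fin n) :=
  univ.filter fun k : Fin n => s ≤ (k : ℕ) ∧ (k : ℕ) < s + x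

def consecutiveBlocks (n : ℕ) : ℕ → List ℕ → Finset (Finset (Fin n))
  | _, [] => ∅
  | s, x :: β => ({finIco n s x} : Finset _).filter Finset.Nonempty ∪ consecutiveBlocks n (s + x) β

lemma sum_filter_lt_succ {M : Type*} [AddCommMonoid M] {l : ℕ} (b : Fin (l + 1) → M) (i : Fin l) :
    ∑ j with j < i.succ, b j = b 0 + ∑ j with j < i, b j.succ := by
  rw [sum_filter, sum_filter, Fin.sum_univ_succ]
  simp [Fin.succ_lt_succ_iff, Fin.succ_pos]

lemma filter_nonempty_image_finIco {n : ℕ} :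
    ∀ {l : ℕ} (b : Fin l → ℕ) (s : ℕ),
      (univ.image fun i => finIco n (s + ∑ j with j < i, b j) (b i)).filter Finset.Nonempty
        = consecutiveBlocks n s (List.ofFn b)
  | 0, b, s => by simp [consecutiveBlocks]
  | l + 1, b, s => by
    have himage : ∀ F : Fin (l + 1) → Finset (Fin n),
        univ.image F = insert (F 0) (univ.image fun i : Fin l => F i.succ) := fun F => by
      rw [Fin.univ_succ, cons_eq_insert, image_insert, map_eq_image, image_image]
      rfl
    have hzero : ∑ j with j < (0 : Fin (l + 1)), b j = 0 := by simp
    rw [List.ofFn_succ, consecutiveBlocks, ← filter_nonempty_image_finIco (fun j => b j.succ),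
      himage, filter_insert, filter_singleton, hzero, add_zero]
    simp only [sum_filter_lt_succ, ← add_assoc]
    split_ifs
    · rw [insert_eq]
    · rw [empty_union]

lemma consecutiveBlocks_filter_ne_zero (n : ℕ) :
    ∀ (β : List ℕ) (s : ℕ), consecutiveBlocks n s (β.filter (· ≠ 0)) = consecutiveBlocks n s β
  | [], _ => rfl
  | x :: β, s => by
    by_cases hx : x = 0
    · have hempty : finIco n s 0 = ∅ := by ext; simp [finIco]
      rw [List.filter_cons_of_neg (by simpa using hx), consecutiveBlocks_filter_ne_zero n β,
        consecutiveBlocks, hx, hempty, add_zero, filter_singleton, if_neg (by simp),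
        empty_union]
    · rw [List.filter_cons_of_pos (by simpa using hx), consecutiveBlocks, consecutiveBlocks,
        consecutiveBlocks_filter_ne_zero n β]

lemma intervalBlocks_eq_consecutiveBlocks (n : ℕ) {l : ℕ} (b : Fin l → ℕ) :
    intervalBlocks n b = consecutiveBlocks n 0 (List.ofFn b) := by
  have h := filter_nonempty_image_finIco (n := n) b 0
  simp only [zero_add] at h
  exact h

lemma intervalBlocks_eq_intervalBlocksL (n : ℕ) {l : ℕ} (b : Fin l → ℕ) :
    intervalBlocks n b = intervalBlocksL n ((List.ofFn b).filter (· ≠ 0)) := by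
  rw [intervalBlocksL, intervalBlocks_eq_consecutiveBlocks, intervalBlocks_eq_consecutiveBlocks,
    List.ofFn_get, consecutiveBlocks_filter_ne_zero]

end IntervalBlocks

lemma prod_map_factorial_filter_ne_zero (l : List ℕ) :
    ((l.filter (· ≠ 0)).map Nat.factorial).prod = (l.map Nat.factorial).prod := by
  induction l with
  | nil => rfl
  | cons x l ih =>
    by_cases hx : x = 0
    · rw [List.filter_cons_of_neg (by simpa using hx), ih, hx]
      simp
    · rw [List.filter_cons_of_pos (by simpa using hx), List.map_cons, List.map_cons,
        List.prod_cons, List.prod_cons, ih]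

lemma applyMap_id {n : ℕ} (π : Finset (Finset (Fin n))) : applyMap id π = π := by
  simp [applyMap]

open Perm in
lemma ribbonNC_eq_sum_isHessenbergPerm (N n : ℕ) {α : List ℕ} (hα : ∀ x ∈ α, 0 < x) :
    ribbonNC N n α = ∑ ε : Perm (Fin (ribbonOuter α).length) with IsHessenbergPerm ε,
      ((sign ε : ℤ) : ℚ) • ((1 / (((ribbonParts α ε).map Nat.factorial).prod : ℕ) : ℚ) •
        hNC N (intervalBlocksL n (ribbonParts α ε))) := by
  rw [ribbonNC, sNC, sum_filter]
  refine sum_congr rfl fun ε _ => ?_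
  simp only [betaInt_ribbon, ribbonBeta_nonneg_iff hα (length_ribbonOuter α), applyMap_id,
    intervalBlocks_eq_intervalBlocksL]
  split_ifs
  · rw [smul_smul, ribbonParts, prod_map_factorial_filter_ne_zero, List.map_ofFn, List.prod_ofFn]
    push_cast
    simp [Finset.prod_inv_distrib]
  · rfl

theorem ribbon_h_expansion_general (N n : ℕ) (α : List ℕ)
    (hα : ∀ x ∈ α, 0 < x) :
    ribbonNC N n α =
      ((-1 : ℚ) ^ α.length) •
        ((coarsenList α).map fun β =>
            ((-1 : ℚ) ^ β.length * (1 / (((β.map Nat.factorial).prod : ℕ) : ℚ))) •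
              hNC N (intervalBlocksL n β)).sum := by
  rw [ribbonNC_eq_sum_isHessenbergPerm N n hα, sum_isHessenbergPerm_ribbonParts hα
    (length_ribbonOuter α) fun β => (1 / ((β.map Nat.factorial).prod : ℕ) : ℚ) •
      hNC N (intervalBlocksL n β), List.smul_sum, List.map_map]
  refine congrArg List.sum (List.map_congr_left fun β _ => ?_)
  simp only [Function.comp_apply, smul_smul, pow_add, mul_assoc]

/-- `r_{[α]} = (−1)^{ℓ(α)} Σ_{β ≽ α} (−1)^{ℓ(β)} (1/β!) h_{[β]}`,
summed over all coarsenings `β` of `α`. -/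
theorem ribbon_h_expansion (N n : ℕ) (hN : 0 < N) (α : List ℕ)
    (hα : ∀ x ∈ α, 0 < x) (hsum : α.sum = n) (hn : 1 ≤ n) :
    ribbonNC N n α =
      ((-1 : ℚ) ^ α.length) •
        ((coarsenList α).map fun β =>
            ((-1 : ℚ) ^ β.length * (1 / (((β.map Nat.factorial).prod : ℕ) : ℚ))) •
              hNC N (intervalBlocksL n β)).sum :=
  ribbon_h_expansion_general N n α hα

end NCSymPaper
end
end
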